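/- For arbitrary reasonable classes U, V, W of finite-word automata, LTL[U] and CTL[V, W] have incomparable expressivity: neither LTL[U] ≤ CTL[V, W] nor CTL[V, W] ≤ LTL[U]. In particular, LTL[U] formulas are invariant under trace equivalence of Kripke Transition Systems while CTL[V, W] formulas are not, and the plain LTL formula F G ¬q is not expressible in CTL[V, W]. -/
import Mathlib

open Classical

set_option maxHeartbeats 1000000

universe u v

/-- A Kripke Transition System over atomic propositions `AP`, actions `Γ` and states `S`,
with a distinguished initial state.  (Following the paper, we consider only infinite paths,
so no totality condition is needed.) -/
structure KTS (AP Γ : Type) (S : Type u) where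
  init : S
  trans : S → Γ → S → Prop
  label : S → Set AP

/-- An (infinite) path of a KTS: an alternating sequence of states and actions. -/
structure KPath {AP Γ : Type} {S : Type u} (K : KTS AP Γ S) where
  states : ℕ → S
  acts : ℕ → Γ
  step : ∀ i, K.trans (states i) (acts i) (states (i + 1))

namespace KPath

variable {AP Γ : Type} {S : Type u} {K : KTS AP Γ S}

/-- The suffix `π^i` of a path. -/
def suffix (π : KPath K) (i : ℕ) : KPath K where
  states := fun j => π.states (i + j)
  acts := fun j => π.acts (i + j)
  step := fun j => π.step (i + j)

/-- `Actions(π, k) = a₀ a₁ … a_k`. -/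
def actionsUpTo (π : KPath K) (k : ℕ) : List Γ :=
  (List.range (k + 1)).map π.acts

/-- The trace `(λ(s₀) a₀)(λ(s₁) a₁)⋯` of a path, an infinite word over `2^AP × Γ`. -/
def trace (π : KPath K) : ℕ → Set AP × Γ :=
  fun i => (K.label (π.states i), π.acts i)

end KPath

/-- The set of traces of paths of `K` starting in the initial state. -/
def KTS.traces {AP Γ : Type} {S : Type u} (K : KTS AP Γ S) : Set (ℕ → Set AP × Γ) :=
  {w | ∃ π : KPath K, π.states 0 = K.init ∧ π.trace = w}

/-- Syntax of `LTL[U]`: formulas over atomic propositions `AP` whose until modalities are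
parameterised by automata from a class represented by the type `A`. -/
inductive LTLF (AP A : Type) : Type where
  | atom : AP → LTLF AP A
  | neg : LTLF AP A → LTLF AP A
  | conj : LTLF AP A → LTLF AP A → LTLF AP A
  | untl : A → LTLF AP A → LTLF AP A → LTLF AP A

namespace LTLF

variable {AP Γ A : Type} {S : Type u}

/-- Semantics of `LTL[U]` over a path of a KTS; the parameter automata are interpreted through
the language function `lang`. -/
def Sat (lang : A → Set (List Γ)) (K : KTS AP Γ S) : LTLF AP A → KPath K → Prop
  | .atom p, π => p ∈ K.label (π.states 0)
  | .neg φ, π => ¬ Sat lang K φ π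
  | .conj φ ψ, π => Sat lang K φ π ∧ Sat lang K ψ π
  | .untl a φ ψ, π => ∃ k, Sat lang K ψ (π.suffix k) ∧
      (∀ j < k, Sat lang K φ (π.suffix j)) ∧ π.actionsUpTo k ∈ lang a

/-- Size of a formula: the number of operators plus the sizes of the occurring automata. -/
def size (asize : A → ℕ) : LTLF AP A → ℕ
  | .atom _ => 1
  | .neg φ => size asize φ + 1
  | .conj φ ψ => size asize φ + size asize ψ + 1
  | .untl a φ ψ => asize a + size asize φ + size asize ψ + 1

/-- All automaton parameters of the formula satisfy `P`. -/
def AllParams (P : A → Prop) : LTLF AP A → Prop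
  | .atom _ => True
  | .neg φ => AllParams P φ
  | .conj φ ψ => AllParams P φ ∧ AllParams P ψ
  | .untl a φ ψ => P a ∧ AllParams P φ ∧ AllParams P ψ

/-- A formula `true` (for a fixed atomic proposition used to build it). -/
def tt (q : AP) : LTLF AP A := .neg (.conj (.atom q) (.neg (.atom q)))

end LTLF

/-- `K ⊨ φ` for LTL: every path starting in the initial state satisfies `φ`. -/
def KTS.LTLModels {AP Γ A : Type} {S : Type u} (lang : A → Set (List Γ))
    (K : KTS AP Γ S) (φ : LTLF AP A) : Prop :=
  ∀ π : KPath K, π.states 0 = K.init → LTLF.Sat lang K φ π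

/-- Satisfiability of an LTL[U] formula: some KTS is a model of it. -/
def LTLSatisfiable {AP Γ A : Type} (lang : A → Set (List Γ)) (φ : LTLF AP A) : Prop :=
  ∃ (S : Type) (K : KTS AP Γ S), K.LTLModels lang φ

/-- The linear-time language `L(φ)` of an LTL formula: the set of traces of paths
(of arbitrary KTSs) satisfying `φ`. -/
def LTLTraceLang {AP Γ A : Type} (lang : A → Set (List Γ)) (φ : LTLF AP A) :
    Set (ℕ → Set AP × Γ) :=
  {w | ∃ (S : Type) (K : KTS AP Γ S) (π : KPath K), LTLF.Sat lang K φ π ∧ π.trace = w}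
/-- Syntax of `CTL*[U]`: LTL[U] extended with the existential path quantifier `E`. -/
inductive CTLSF (AP A : Type) : Type where
  | atom : AP → CTLSF AP A
  | neg : CTLSF AP A → CTLSF AP A
  | conj : CTLSF AP A → CTLSF AP A → CTLSF AP A
  | untl : A → CTLSF AP A → CTLSF AP A → CTLSF AP A
  | ex : CTLSF AP A → CTLSF AP A

namespace CTLSF

variable {AP Γ A : Type} {S : Type u}

/-- Semantics of `CTL*[U]` over paths of a KTS. -/
def Sat (lang : A → Set (List Γ)) (K : KTS AP Γ S) : CTLSF AP A → KPath K → Prop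
  | .atom p, π => p ∈ K.label (π.states 0)
  | .neg φ, π => ¬ Sat lang K φ π
  | .conj φ ψ, π => Sat lang K φ π ∧ Sat lang K ψ π
  | .untl a φ ψ, π => ∃ k, Sat lang K ψ (π.suffix k) ∧
      (∀ j < k, Sat lang K φ (π.suffix j)) ∧ π.actionsUpTo k ∈ lang a
  | .ex φ, π => ∃ π' : KPath K, π'.states 0 = π.states 0 ∧ Sat lang K φ π'

/-- Size of a formula: number of operators plus sizes of occurring automata. -/
def size (asize : A → ℕ) : CTLSF AP A → ℕ
  | .atom _ => 1
  | .neg φ => size asize φ + 1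
  | .conj φ ψ => size asize φ + size asize ψ + 1
  | .untl a φ ψ => asize a + size asize φ + size asize ψ + 1
  | .ex φ => size asize φ + 1

/-- All automaton parameters of the formula satisfy `P`. -/
def AllParams (P : A → Prop) : CTLSF AP A → Prop
  | .atom _ => True
  | .neg φ => AllParams P φ
  | .conj φ ψ => AllParams P φ ∧ AllParams P ψ
  | .untl a φ ψ => P a ∧ AllParams P φ ∧ AllParams P ψ
  | .ex φ => AllParams P φ

/-- A formula `true` (built from a fixed atomic proposition). -/
def tt (q : AP) : CTLSF AP A := .neg (.conj (.atom q) (.neg (.atom q)))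

end CTLSF

/-- `K ⊨ φ` for CTL*: every path starting in the initial state satisfies `φ`. -/
def KTS.CTLSModels {AP Γ A : Type} {S : Type u} (lang : A → Set (List Γ))
    (K : KTS AP Γ S) (φ : CTLSF AP A) : Prop :=
  ∀ π : KPath K, π.states 0 = K.init → CTLSF.Sat lang K φ π

/-- Satisfiability of a CTL*[U] formula. -/
def CTLSSatisfiable {AP Γ A : Type} (lang : A → Set (List Γ)) (φ : CTLSF AP A) : Prop :=
  ∃ (S : Type) (K : KTS AP Γ S), K.CTLSModels lang φ

mutual
  /-- Path formulas of `CTL⁺[U]`: Boolean combinations of until modalities over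
  state formulas (no nesting of modalities without an intervening quantifier). -/
  inductive IsPlusPath {AP A : Type} : CTLSF AP A → Prop where
    | untl : ∀ (a : A) (φ ψ : CTLSF AP A), IsPlusState φ → IsPlusState ψ →
        IsPlusPath (.untl a φ ψ)
    | neg : ∀ φ, IsPlusPath φ → IsPlusPath (.neg φ)
    | conj : ∀ φ ψ, IsPlusPath φ → IsPlusPath ψ → IsPlusPath (.conj φ ψ)

  /-- State formulas of `CTL⁺[U]`; a `CTL⁺[U]` formula is a CTL*[U] formula satisfying
  this predicate. -/
  inductive IsPlusState {AP A : Type} : CTLSF AP A → Prop where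
    | atom : ∀ p, IsPlusState (.atom p)
    | neg : ∀ φ, IsPlusState φ → IsPlusState (.neg φ)
    | conj : ∀ φ ψ, IsPlusState φ → IsPlusState ψ → IsPlusState (.conj φ ψ)
    | ex : ∀ φ, IsPlusPath φ → IsPlusState (.ex φ)
end

/-- Syntax of `CTL[U, V]`: every modality is directly quantified; the until modalities carry
automata from the class `U`, the release modalities automata from the class `V`. -/
inductive CTLF2 (AP A : Type) (U V : Set A) : Type where
  | atom : AP → CTLF2 AP A U V
  | neg : CTLF2 AP A U V → CTLF2 AP A U V
  | conj : CTLF2 AP A U V → CTLF2 AP A U V → CTLF2 AP A U V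
  | eu : {a // a ∈ U} → CTLF2 AP A U V → CTLF2 AP A U V → CTLF2 AP A U V
  | au : {a // a ∈ U} → CTLF2 AP A U V → CTLF2 AP A U V → CTLF2 AP A U V
  | er : {a // a ∈ V} → CTLF2 AP A U V → CTLF2 AP A U V → CTLF2 AP A U V
  | ar : {a // a ∈ V} → CTLF2 AP A U V → CTLF2 AP A U V → CTLF2 AP A U V

namespace CTLF2

variable {AP Γ A : Type} {U V : Set A} {S : Type u}

/-- State semantics of `CTL[U, V]`. -/
def Sat (lang : A → Set (List Γ)) (K : KTS AP Γ S) : CTLF2 AP A U V → S → Prop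
  | .atom p, s => p ∈ K.label s
  | .neg φ, s => ¬ Sat lang K φ s
  | .conj φ ψ, s => Sat lang K φ s ∧ Sat lang K ψ s
  | .eu a φ ψ, s => ∃ π : KPath K, π.states 0 = s ∧ ∃ k, Sat lang K ψ (π.states k) ∧
      (∀ j < k, Sat lang K φ (π.states j)) ∧ π.actionsUpTo k ∈ lang a.1
  | .au a φ ψ, s => ∀ π : KPath K, π.states 0 = s → ∃ k, Sat lang K ψ (π.states k) ∧
      (∀ j < k, Sat lang K φ (π.states j)) ∧ π.actionsUpTo k ∈ lang a.1
  | .er a φ ψ, s => ∃ π : KPath K, π.states 0 = s ∧ ∀ i, π.actionsUpTo i ∉ lang a.1 ∨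
      Sat lang K ψ (π.states i) ∨ ∃ j < i, Sat lang K φ (π.states j)
  | .ar a φ ψ, s => ∀ π : KPath K, π.states 0 = s → ∀ i, π.actionsUpTo i ∉ lang a.1 ∨
      Sat lang K ψ (π.states i) ∨ ∃ j < i, Sat lang K φ (π.states j)

/-- Size of a formula: number of operators plus sizes of occurring automata. -/
def size (asize : A → ℕ) : CTLF2 AP A U V → ℕ
  | .atom _ => 1
  | .neg φ => size asize φ + 1
  | .conj φ ψ => size asize φ + size asize ψ + 1
  | .eu a φ ψ => asize a.1 + size asize φ + size asize ψ + 1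
  | .au a φ ψ => asize a.1 + size asize φ + size asize ψ + 1
  | .er a φ ψ => asize a.1 + size asize φ + size asize ψ + 1
  | .ar a φ ψ => asize a.1 + size asize φ + size asize ψ + 1

end CTLF2

/-- `K ⊨ φ` for CTL[U, V]: the initial state satisfies `φ`. -/
def KTS.CTL2Models {AP Γ A : Type} {U V : Set A} {S : Type u} (lang : A → Set (List Γ))
    (K : KTS AP Γ S) (φ : CTLF2 AP A U V) : Prop :=
  CTLF2.Sat lang K φ K.init

/-- A class of automata (given as a set of automata inside an ambient type of automata,
interpreted through `lang`) is *reasonable* if it contains automata for the languages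
`Σ` and `Σ*` and is closed under language equivalence. -/
def ReasonableCls {Γ A : Type} (lang : A → Set (List Γ)) (X : Set A) : Prop :=
  (∃ a ∈ X, lang a = {w : List Γ | w.length = 1}) ∧
  (∃ a ∈ X, lang a = Set.univ) ∧
  (∀ a ∈ X, ∀ b, lang b = lang a → b ∈ X)
/-- The LTL formula `F G ¬q` (with trivial language parameter `a`, `L(a) = Σ*`):
`F G ¬q = true U^a ¬(true U^a q)`. -/
def FGnotq {AP A : Type} (a : A) (q : AP) : LTLF AP A :=
  .untl a (LTLF.tt q) (.neg (.untl a (LTLF.tt q) (.atom q)))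


/-! ### Auxiliary development -/

section Aux

variable {AP Γ A : Type}

/-- Transport a path along equal transition relations. -/
def KPath.copyK {S : Type} {K K' : KTS AP Γ S} (h : K.trans = K'.trans)
    (π : KPath K) : KPath K' where
  states := π.states
  acts := π.acts
  step := fun i => by rw [← h]; exact π.step i

@[simp] lemma KPath.copyK_states {S : Type} {K K' : KTS AP Γ S} (h : K.trans = K'.trans)
    (π : KPath K) : (π.copyK h).states = π.states := rfl

@[simp] lemma KPath.copyK_actionsUpTo {S : Type} {K K' : KTS AP Γ S} (h : K.trans = K'.trans)
    (π : KPath K) (k : ℕ) : (π.copyK h).actionsUpTo k = π.actionsUpTo k := rfl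

/-- `CTLF2.Sat` only depends on the transition relation and labelling. -/
lemma CTLF2.sat_congr {S : Type} {Va Wa : Set A} (lang : A → Set (List Γ))
    (K K' : KTS AP Γ S) (ht : K.trans = K'.trans) (hl : K.label = K'.label) :
    ∀ (φ : CTLF2 AP A Va Wa) (s : S), CTLF2.Sat lang K φ s ↔ CTLF2.Sat lang K' φ s := by
  intro φ
  induction φ with
  | atom p => intro s; simp [CTLF2.Sat, hl]
  | neg φ ih => intro s; simp [CTLF2.Sat, ih]
  | conj φ ψ ih1 ih2 => intro s; simp [CTLF2.Sat, ih1, ih2]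
  | eu a φ ψ ih1 ih2 =>
      intro s; simp only [CTLF2.Sat]
      constructor
      · rintro ⟨π, h0, k, hk, hj, ha⟩
        exact ⟨π.copyK ht, h0, k, (ih2 _).1 hk, fun j hj' => (ih1 _).1 (hj j hj'), ha⟩
      · rintro ⟨π, h0, k, hk, hj, ha⟩
        exact ⟨π.copyK ht.symm, h0, k, (ih2 _).2 hk, fun j hj' => (ih1 _).2 (hj j hj'), ha⟩
  | au a φ ψ ih1 ih2 =>
      intro s; simp only [CTLF2.Sat]
      constructor
      · intro H π h0
        obtain ⟨k, hk, hj, ha⟩ := H (π.copyK ht.symm) h0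
        exact ⟨k, (ih2 _).1 hk, fun j hj' => (ih1 _).1 (hj j hj'), ha⟩
      · intro H π h0
        obtain ⟨k, hk, hj, ha⟩ := H (π.copyK ht) h0
        exact ⟨k, (ih2 _).2 hk, fun j hj' => (ih1 _).2 (hj j hj'), ha⟩
  | er a φ ψ ih1 ih2 =>
      intro s; simp only [CTLF2.Sat]
      constructor
      · rintro ⟨π, h0, H⟩
        refine ⟨π.copyK ht, h0, fun i => ?_⟩
        rcases H i with h | h | ⟨j, hj, hφ⟩
        · exact Or.inl h
        · exact Or.inr (Or.inl ((ih2 _).1 h))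
        · exact Or.inr (Or.inr ⟨j, hj, (ih1 _).1 hφ⟩)
      · rintro ⟨π, h0, H⟩
        refine ⟨π.copyK ht.symm, h0, fun i => ?_⟩
        rcases H i with h | h | ⟨j, hj, hφ⟩
        · exact Or.inl h
        · exact Or.inr (Or.inl ((ih2 _).2 h))
        · exact Or.inr (Or.inr ⟨j, hj, (ih1 _).2 hφ⟩)
  | ar a φ ψ ih1 ih2 =>
      intro s; simp only [CTLF2.Sat]
      constructor
      · intro H π h0 i
        rcases H (π.copyK ht.symm) h0 i with h | h | ⟨j, hj, hφ⟩
        · exact Or.inl h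
        · exact Or.inr (Or.inl ((ih2 _).1 h))
        · exact Or.inr (Or.inr ⟨j, hj, (ih1 _).1 hφ⟩)
      · intro H π h0 i
        rcases H (π.copyK ht) h0 i with h | h | ⟨j, hj, hφ⟩
        · exact Or.inl h
        · exact Or.inr (Or.inl ((ih2 _).2 h))
        · exact Or.inr (Or.inr ⟨j, hj, (ih1 _).2 hφ⟩)

/-- Trace of a suffix. -/
lemma KPath.trace_suffix {S : Type} {K : KTS AP Γ S} (π : KPath K) (k : ℕ) :
    (π.suffix k).trace = fun i => π.trace (k + i) := rfl

/-- Satisfaction of LTL formulas only depends on the trace. -/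
lemma LTLF.sat_trace_inv {S S' Ua : Type} (lg : Ua → Set (List Γ))
    {K : KTS AP Γ S} {K' : KTS AP Γ S'} :
    ∀ (φ : LTLF AP Ua) (π : KPath K) (π' : KPath K'), π.trace = π'.trace →
    (LTLF.Sat lg K φ π ↔ LTLF.Sat lg K' φ π') := by
  intro φ
  induction φ with
  | atom p =>
      intro π π' h
      have h0 : K.label (π.states 0) = K'.label (π'.states 0) := by
        have := congrFun h 0
        exact congrArg Prod.fst this
      simp [LTLF.Sat, h0]
  | neg φ ih => intro π π' h; simp [LTLF.Sat, ih π π' h]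
  | conj φ ψ ih1 ih2 => intro π π' h; simp [LTLF.Sat, ih1 π π' h, ih2 π π' h]
  | untl a φ ψ ih1 ih2 =>
      intro π π' h
      have hsuf : ∀ k, (π.suffix k).trace = (π'.suffix k).trace := by
        intro k; funext i
        simpa [KPath.trace_suffix] using congrFun h (k + i)
      have hacts : ∀ i, π.acts i = π'.acts i := by
        intro i
        have := congrFun h i
        exact congrArg Prod.snd this
      have haup : ∀ k, π.actionsUpTo k = π'.actionsUpTo k := by
        intro k
        unfold KPath.actionsUpTo
        exact List.map_congr_left (fun j _ => hacts j)
      simp only [LTLF.Sat]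
      constructor
      · rintro ⟨k, hk, hj, ha⟩
        exact ⟨k, (ih2 _ _ (hsuf k)).1 hk, fun j hj' => (ih1 _ _ (hsuf j)).1 (hj j hj'),
          (haup k) ▸ ha⟩
      · rintro ⟨k, hk, hj, ha⟩
        exact ⟨k, (ih2 _ _ (hsuf k)).2 hk, fun j hj' => (ih1 _ _ (hsuf j)).2 (hj j hj'),
          (haup k).symm ▸ ha⟩

/-- Conjunct 3: invariance of LTL[U] under trace equivalence. -/
lemma ltl_trace_invariant {S S' Ua : Type} (lg : Ua → Set (List Γ))
    (K : KTS AP Γ S) (K' : KTS AP Γ S') (h : K.traces = K'.traces) (φ : LTLF AP Ua) :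
    K.LTLModels lg φ ↔ K'.LTLModels lg φ := by
  constructor
  · intro H π' h0'
    have : π'.trace ∈ K'.traces := ⟨π', h0', rfl⟩
    rw [← h] at this
    obtain ⟨π, h0, htr⟩ := this
    exact (LTLF.sat_trace_inv lg φ π π' htr).1 (H π h0)
  · intro H π h0
    have : π.trace ∈ K.traces := ⟨π, h0, rfl⟩
    rw [h] at this
    obtain ⟨π', h0', htr⟩ := this
    exact (LTLF.sat_trace_inv lg φ π π' htr.symm).2 (H π' h0')


/-! #### Generic true/false CTL formulas -/

def C2tt {A : Type} (q : AP) {Va Wa : Set A} : CTLF2 AP A Va Wa :=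
  .neg (.conj (.atom q) (.neg (.atom q)))

def C2ff {A : Type} (q : AP) {Va Wa : Set A} : CTLF2 AP A Va Wa :=
  .conj (.atom q) (.neg (.atom q))

lemma sat_C2tt {A : Type} {S : Type} {Va Wa : Set A} (lang : A → Set (List Γ))
    (K : KTS AP Γ S) (q : AP) (s : S) : CTLF2.Sat lang K (C2tt (Va := Va) (Wa := Wa) q) s := by
  simp only [C2tt, CTLF2.Sat]
  rintro ⟨h1, h2⟩; exact h2 h1

lemma not_sat_C2ff {A : Type} {S : Type} {Va Wa : Set A} (lang : A → Set (List Γ))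
    (K : KTS AP Γ S) (q : AP) (s : S) : ¬ CTLF2.Sat lang K (C2ff (Va := Va) (Wa := Wa) q) s := by
  simp only [C2ff, CTLF2.Sat]
  rintro ⟨h1, h2⟩; exact h2 h1

/-! #### The two models for conjunct 4 -/

inductive StA : Type | a0 | a1 | a2 | a3
deriving DecidableEq

inductive StB : Type | b0 | b1 | b1' | b2 | b3
deriving DecidableEq

def EA : StA → StA → Prop
  | .a0, .a1 => True
  | .a1, .a2 => True
  | .a1, .a3 => True
  | .a2, .a2 => True
  | .a3, .a3 => True
  | _, _ => False

def EB : StB → StB → Prop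
  | .b0, .b1 => True
  | .b0, .b1' => True
  | .b1, .b2 => True
  | .b1', .b3 => True
  | .b2, .b2 => True
  | .b3, .b3 => True
  | _, _ => False

def lblA (q m : AP) : StA → Set AP
  | .a0 => ∅
  | .a1 => {q}
  | .a2 => {m}
  | .a3 => ∅

def lblB (q m : AP) : StB → Set AP
  | .b0 => ∅
  | .b1 => {q}
  | .b1' => {q}
  | .b2 => {m}
  | .b3 => ∅

def KA (q m : AP) (γ₀ : Γ) : KTS AP Γ StA :=
  ⟨.a0, fun s γ t => EA s t ∧ γ = γ₀, lblA q m⟩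

def KB (q m : AP) (γ₀ : Γ) : KTS AP Γ StB :=
  ⟨.b0, fun s γ t => EB s t ∧ γ = γ₀, lblB q m⟩

/-- The distinguishing formula `EF (q ∧ (EF m) ∧ (EG ¬m))`. -/
def psi4 {A : Type} {Va Wa : Set A} (q m : AP) (aV : {a // a ∈ Va}) (aW : {a // a ∈ Wa}) :
    CTLF2 AP A Va Wa :=
  .eu aV (C2tt q) (.conj (.atom q)
    (.conj (.eu aV (C2tt q) (.atom m)) (.er aW (C2ff q) (.neg (.atom m)))))

section Conj4

variable {A : Type} {Va Wa : Set A} (lang : A → Set (List Γ))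
variable (q m : AP) (γ₀ : Γ)

/-- Structure of paths of `KA` starting anywhere. -/
lemma KA_acts (π : KPath (KA (AP := AP) q m γ₀)) : ∀ i, π.acts i = γ₀ :=
  fun i => (π.step i).2

lemma KA_actionsUpTo (π : KPath (KA (AP := AP) q m γ₀)) (k : ℕ) :
    π.actionsUpTo k = List.replicate (k+1) γ₀ := by
  unfold KPath.actionsUpTo
  rw [List.eq_replicate_iff]
  refine ⟨by simp, ?_⟩
  intro b hb
  simp only [List.mem_map, List.mem_range] at hb
  obtain ⟨j, _, hj⟩ := hb
  rw [← hj]; exact KA_acts q m γ₀ π j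

lemma KB_acts (π : KPath (KB (AP := AP) q m γ₀)) : ∀ i, π.acts i = γ₀ :=
  fun i => (π.step i).2

lemma KB_actionsUpTo (π : KPath (KB (AP := AP) q m γ₀)) (k : ℕ) :
    π.actionsUpTo k = List.replicate (k+1) γ₀ := by
  unfold KPath.actionsUpTo
  rw [List.eq_replicate_iff]
  refine ⟨by simp, ?_⟩
  intro b hb
  simp only [List.mem_map, List.mem_range] at hb
  obtain ⟨j, _, hj⟩ := hb
  rw [← hj]; exact KB_acts q m γ₀ π j


lemma EA_a0 {t : StA} (h : EA .a0 t) : t = .a1 := by cases t <;> simp_all [EA]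
lemma EA_a1 {t : StA} (h : EA .a1 t) : t = .a2 ∨ t = .a3 := by cases t <;> simp_all [EA]
lemma EA_a2 {t : StA} (h : EA .a2 t) : t = .a2 := by cases t <;> simp_all [EA]
lemma EA_a3 {t : StA} (h : EA .a3 t) : t = .a3 := by cases t <;> simp_all [EA]

lemma EB_b0 {t : StB} (h : EB .b0 t) : t = .b1 ∨ t = .b1' := by cases t <;> simp_all [EB]
lemma EB_b1 {t : StB} (h : EB .b1 t) : t = .b2 := by cases t <;> simp_all [EB]
lemma EB_b1' {t : StB} (h : EB .b1' t) : t = .b3 := by cases t <;> simp_all [EB]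
lemma EB_b2 {t : StB} (h : EB .b2 t) : t = .b2 := by cases t <;> simp_all [EB]
lemma EB_b3 {t : StB} (h : EB .b3 t) : t = .b3 := by cases t <;> simp_all [EB]

/-- The two traces of both models. -/
def wM (q m : AP) (γ₀ : Γ) : ℕ → Set AP × Γ :=
  fun i => (if i = 0 then (∅ : Set AP) else if i = 1 then {q} else {m}, γ₀)

def wN (q : AP) (γ₀ : Γ) : ℕ → Set AP × Γ :=
  fun i => (if i = 0 then (∅ : Set AP) else if i = 1 then {q} else ∅, γ₀)

/-- Canonical paths in `KA`. -/
def pAM : KPath (KA (AP := AP) q m γ₀) where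
  states := fun i => if i = 0 then .a0 else if i = 1 then .a1 else .a2
  acts := fun _ => γ₀
  step := by
    intro i
    refine ⟨?_, rfl⟩
    rcases i with _ | _ | i <;> simp [EA]

def pAN : KPath (KA (AP := AP) q m γ₀) where
  states := fun i => if i = 0 then .a0 else if i = 1 then .a1 else .a3
  acts := fun _ => γ₀
  step := by
    intro i
    refine ⟨?_, rfl⟩
    rcases i with _ | _ | i <;> simp [EA]

/-- Path from `a1` through `a2`. -/
def pA12 : KPath (KA (AP := AP) q m γ₀) where
  states := fun i => if i = 0 then .a1 else .a2
  acts := fun _ => γ₀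
  step := by
    intro i
    refine ⟨?_, rfl⟩
    rcases i with _ | i <;> simp [EA]

/-- Path from `a1` through `a3`. -/
def pA13 : KPath (KA (AP := AP) q m γ₀) where
  states := fun i => if i = 0 then .a1 else .a3
  acts := fun _ => γ₀
  step := by
    intro i
    refine ⟨?_, rfl⟩
    rcases i with _ | i <;> simp [EA]

def pBM : KPath (KB (AP := AP) q m γ₀) where
  states := fun i => if i = 0 then .b0 else if i = 1 then .b1 else .b2
  acts := fun _ => γ₀
  step := by
    intro i
    refine ⟨?_, rfl⟩
    rcases i with _ | _ | i <;> simp [EB]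

def pBN : KPath (KB (AP := AP) q m γ₀) where
  states := fun i => if i = 0 then .b0 else if i = 1 then .b1' else .b3
  acts := fun _ => γ₀
  step := by
    intro i
    refine ⟨?_, rfl⟩
    rcases i with _ | _ | i <;> simp [EB]

lemma KA_path_struct (π : KPath (KA (AP := AP) q m γ₀)) (h0 : π.states 0 = .a0) :
    π.states 1 = .a1 ∧
      ((∀ i, 2 ≤ i → π.states i = .a2) ∨ (∀ i, 2 ≤ i → π.states i = .a3)) := by
  have h1 : π.states 1 = .a1 := by
    have := (π.step 0).1
    rw [h0] at this
    exact EA_a0 this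
  refine ⟨h1, ?_⟩
  have h2 : π.states 2 = .a2 ∨ π.states 2 = .a3 := by
    have := (π.step 1).1
    rw [h1] at this
    exact EA_a1 this
  rcases h2 with h2 | h2
  · left
    intro i hi
    induction i, hi using Nat.le_induction with
    | base => exact h2
    | succ n hn ih =>
        have := (π.step n).1
        rw [ih] at this
        exact EA_a2 this
  · right
    intro i hi
    induction i, hi using Nat.le_induction with
    | base => exact h2
    | succ n hn ih =>
        have := (π.step n).1
        rw [ih] at this
        exact EA_a3 this

lemma KB_path_struct (π : KPath (KB (AP := AP) q m γ₀)) (h0 : π.states 0 = .b0) :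
    (π.states 1 = .b1 ∧ (∀ i, 2 ≤ i → π.states i = .b2)) ∨
    (π.states 1 = .b1' ∧ (∀ i, 2 ≤ i → π.states i = .b3)) := by
  have h1 : π.states 1 = .b1 ∨ π.states 1 = .b1' := by
    have := (π.step 0).1
    rw [h0] at this
    exact EB_b0 this
  rcases h1 with h1 | h1
  · left
    refine ⟨h1, ?_⟩
    have h2 : π.states 2 = .b2 := by
      have := (π.step 1).1
      rw [h1] at this
      exact EB_b1 this
    intro i hi
    induction i, hi using Nat.le_induction with
    | base => exact h2
    | succ n hn ih =>
        have := (π.step n).1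
        rw [ih] at this
        exact EB_b2 this
  · right
    refine ⟨h1, ?_⟩
    have h2 : π.states 2 = .b3 := by
      have := (π.step 1).1
      rw [h1] at this
      exact EB_b1' this
    intro i hi
    induction i, hi using Nat.le_induction with
    | base => exact h2
    | succ n hn ih =>
        have := (π.step n).1
        rw [ih] at this
        exact EB_b3 this

lemma KA_traces : (KA (AP := AP) q m γ₀).traces = {wM q m γ₀, wN q γ₀} := by
  ext w
  constructor
  · rintro ⟨π, h0, rfl⟩
    obtain ⟨h1, h2 | h2⟩ := KA_path_struct q m γ₀ π h0
    · left
      funext i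
      have ha := KA_acts q m γ₀ π i
      rcases i with _ | _ | i
      · simp [KPath.trace, wM, h0, KA, lblA, ha]
      · simp [KPath.trace, wM, h1, KA, lblA, ha]
      · have := h2 (i+2) (by omega)
        simp [KPath.trace, wM, this, KA, lblA, ha]
    · right
      funext i
      have ha := KA_acts q m γ₀ π i
      rcases i with _ | _ | i
      · simp [KPath.trace, wN, h0, KA, lblA, ha]
      · simp [KPath.trace, wN, h1, KA, lblA, ha]
      · have := h2 (i+2) (by omega)
        simp [KPath.trace, wN, this, KA, lblA, ha]
  · rintro (rfl | rfl)
    · refine ⟨pAM q m γ₀, by simp [pAM, KA], ?_⟩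
      funext i
      rcases i with _ | _ | i <;> simp [KPath.trace, wM, pAM, KA, lblA]
    · refine ⟨pAN q m γ₀, by simp [pAN, KA], ?_⟩
      funext i
      rcases i with _ | _ | i <;> simp [KPath.trace, wN, pAN, KA, lblA]

lemma KB_traces : (KB (AP := AP) q m γ₀).traces = {wM q m γ₀, wN q γ₀} := by
  ext w
  constructor
  · rintro ⟨π, h0, rfl⟩
    rcases KB_path_struct q m γ₀ π h0 with ⟨h1, h2⟩ | ⟨h1, h2⟩
    · left
      funext i
      have ha := KB_acts q m γ₀ π i
      rcases i with _ | _ | i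
      · simp [KPath.trace, wM, h0, KB, lblB, ha]
      · simp [KPath.trace, wM, h1, KB, lblB, ha]
      · have := h2 (i+2) (by omega)
        simp [KPath.trace, wM, this, KB, lblB, ha]
    · right
      funext i
      have ha := KB_acts q m γ₀ π i
      rcases i with _ | _ | i
      · simp [KPath.trace, wN, h0, KB, lblB, ha]
      · simp [KPath.trace, wN, h1, KB, lblB, ha]
      · have := h2 (i+2) (by omega)
        simp [KPath.trace, wN, this, KB, lblB, ha]
  · rintro (rfl | rfl)
    · refine ⟨pBM q m γ₀, by simp [pBM, KB], ?_⟩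
      funext i
      rcases i with _ | _ | i <;> simp [KPath.trace, wM, pBM, KB, lblB]
    · refine ⟨pBN q m γ₀, by simp [pBN, KB], ?_⟩
      funext i
      rcases i with _ | _ | i <;> simp [KPath.trace, wN, pBN, KB, lblB]

lemma KA_sat_psi4 (hqm : q ≠ m) (aV : {a // a ∈ Va}) (aW : {a // a ∈ Wa})
    (hV2 : lang aV.1 = Set.univ) (hW2 : lang aW.1 = Set.univ) :
    CTLF2.Sat lang (KA (AP := AP) q m γ₀) (psi4 q m aV aW) StA.a0 := by
  refine ⟨pAM q m γ₀, by simp [pAM], 1, ?_, ?_, ?_⟩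
  · -- inner formula at a1
    have hs : (pAM (AP := AP) q m γ₀).states 1 = .a1 := by simp [pAM]
    rw [hs]
    refine ⟨?_, ?_, ?_⟩
    · -- q holds at a1
      show q ∈ (KA (AP := AP) q m γ₀).label .a1
      simp [KA, lblA]
    · -- EF m at a1
      refine ⟨pA12 q m γ₀, by simp [pA12], 1, ?_, ?_, ?_⟩
      · show m ∈ (KA (AP := AP) q m γ₀).label ((pA12 q m γ₀).states 1)
        simp [pA12, KA, lblA]
      · intro j _
        exact sat_C2tt lang _ q _
      · rw [hV2]; exact Set.mem_univ _
    · -- EG ¬m at a1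
      refine ⟨pA13 q m γ₀, by simp [pA13], fun i => Or.inr (Or.inl ?_)⟩
      show ¬ m ∈ (KA (AP := AP) q m γ₀).label ((pA13 q m γ₀).states i)
      rcases i with _ | i
      · simp [pA13, KA, lblA]
        exact fun h => hqm h.symm
      · simp [pA13, KA, lblA]
  · intro j _
    exact sat_C2tt lang _ q _
  · rw [hV2]; exact Set.mem_univ _

lemma KB_inner_false (hqm : q ≠ m) (aV : {a // a ∈ Va}) (aW : {a // a ∈ Wa})
    (hV2 : lang aV.1 = Set.univ) (hW2 : lang aW.1 = Set.univ) (s : StB) :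
    ¬ CTLF2.Sat lang (KB (AP := AP) q m γ₀)
      (CTLF2.conj (.atom q)
        (CTLF2.conj (.eu aV (C2tt q) (.atom m))
          (.er aW (C2ff q) (.neg (.atom m))))) s := by
  cases s with
  | b0 => rintro ⟨hq, -⟩; simp [CTLF2.Sat, KB, lblB] at hq
  | b2 =>
      rintro ⟨hq, -⟩
      have : q = m := by simpa [CTLF2.Sat, KB, lblB] using hq
      exact hqm this
  | b3 => rintro ⟨hq, -⟩; simp [CTLF2.Sat, KB, lblB] at hq
  | b1 =>
      rintro ⟨-, -, ρ, hρ0, H⟩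
      rcases H 1 with h | h | ⟨j, hj, hff⟩
      · rw [hW2] at h; exact h (Set.mem_univ _)
      · have h1 : ρ.states 1 = .b2 := by
          have := (ρ.step 0).1
          rw [hρ0] at this
          exact EB_b1 this
        apply h
        show m ∈ (KB (AP := AP) q m γ₀).label (ρ.states 1)
        rw [h1]; simp [KB, lblB]
      · exact not_sat_C2ff lang _ q _ hff
  | b1' =>
      rintro ⟨-, ⟨ρ, hρ0, k, hk, -, -⟩, -⟩
      have hcl : ∀ i, ρ.states i = .b1' ∨ ρ.states i = .b3 := by
        intro i
        induction i with
        | zero => exact Or.inl hρ0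
        | succ n ih =>
            have hst := (ρ.step n).1
            rcases ih with h | h
            · rw [h] at hst; exact Or.inr (EB_b1' hst)
            · rw [h] at hst; exact Or.inr (EB_b3 hst)
      have hm : m ∈ (KB (AP := AP) q m γ₀).label (ρ.states k) := hk
      rcases hcl k with h | h <;> rw [h] at hm
      · have : m = q := by simpa [KB, lblB] using hm
        exact hqm this.symm
      · simp [KB, lblB] at hm

lemma KB_not_sat_psi4 (hqm : q ≠ m) (aV : {a // a ∈ Va}) (aW : {a // a ∈ Wa})
    (hV2 : lang aV.1 = Set.univ) (hW2 : lang aW.1 = Set.univ) :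
    ¬ CTLF2.Sat lang (KB (AP := AP) q m γ₀) (psi4 q m aV aW) StB.b0 := by
  rintro ⟨π, h0, k, hk, -, -⟩
  exact KB_inner_false lang q m γ₀ hqm aV aW hV2 hW2 (π.states k) hk

end Conj4


/-! #### Conjunct 5: the budget model and the chain model -/

section Conj5

inductive St5 : Type
  | Z : ℕ → St5
  | Y : ℕ → St5
  | Bc : ℕ → St5
deriving DecidableEq

variable {A : Type} {Va Wa : Set A}

/-- Edge relation of the combined model, parameterised by the set `Pp` of
`q`-positions of the chain. -/
def E5 (Pp : ℕ → Prop) : St5 → St5 → Prop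
  | .Z n, .Z j => j ≤ n
  | .Z n, .Y m' => m' < n
  | .Y m', .Z j => j ≤ m'
  | .Bc t, .Bc u => u = t + 1 ∨ (u = t ∧ ¬ Pp t)
  | .Bc _, .Z _ => True
  | .Bc t, .Y _ => ¬ Pp t
  | _, _ => False

def lbl5 (q : AP) (Pp : ℕ → Prop) : St5 → Set AP
  | .Z _ => ∅
  | .Y _ => {q}
  | .Bc t => if Pp t then {q} else ∅

def M5 (q : AP) (γ₀ : Γ) (Pp : ℕ → Prop) : KTS AP Γ St5 :=
  ⟨.Z 0, fun s γ t => E5 Pp s t ∧ γ = γ₀, lbl5 q Pp⟩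

section Model

variable (Pp : ℕ → Prop)

lemma E5_Z_inv {n : ℕ} {u : St5} (h : E5 Pp (.Z n) u) :
    (∃ j, u = .Z j ∧ j ≤ n) ∨ (∃ m', u = .Y m' ∧ m' < n) := by
  cases u <;> simp_all [E5]

lemma E5_Y_inv {m' : ℕ} {u : St5} (h : E5 Pp (.Y m') u) : ∃ j, u = .Z j ∧ j ≤ m' := by
  cases u <;> simp_all [E5]

lemma E5_Bc_inv {t : ℕ} {u : St5} (h : E5 Pp (.Bc t) u) :
    (u = .Bc (t+1)) ∨ (u = .Bc t ∧ ¬ Pp t) ∨ (∃ j, u = .Z j) ∨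
      (∃ m', u = .Y m' ∧ ¬ Pp t) := by
  cases u <;> simp_all [E5]

lemma E5_Z_up {n n' : ℕ} {u : St5} (h : E5 Pp (.Z n) u) (hn : n ≤ n') :
    E5 Pp (.Z n') u := by
  cases u <;> simp_all [E5] <;> omega

lemma E5_Y_up {m m' : ℕ} {u : St5} (h : E5 Pp (.Y m) u) (hm : m ≤ m') :
    E5 Pp (.Y m') u := by
  cases u <;> simp_all [E5]; omega

lemma E5_Bc_from_Z {n t : ℕ} {u : St5} (h : E5 Pp (.Z n) u) (ht : ¬ Pp t) :
    E5 Pp (.Bc t) u := by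
  cases u <;> simp_all [E5]

lemma E5_Bc_from_Y {m t : ℕ} {u : St5} (h : E5 Pp (.Y m) u) : E5 Pp (.Bc t) u := by
  cases u <;> simp_all [E5]

lemma E5_Z_not_Bc {n t : ℕ} (h : E5 Pp (.Z n) (.Bc t)) : False := by simp [E5] at h

lemma E5_Y_not_Bc {m t : ℕ} (h : E5 Pp (.Y m) (.Bc t)) : False := by simp [E5] at h

/-- Validity of a run. -/
def Vd (f : ℕ → St5) : Prop := ∀ i, E5 Pp (f i) (f (i+1))

/-- Existential until shape. -/
def EshU (T : Set ℕ) (Aa Bb : St5 → Prop) (s : St5) : Prop :=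
  ∃ f : ℕ → St5, f 0 = s ∧ Vd Pp f ∧ ∃ k ∈ T, Bb (f k) ∧ ∀ j < k, Aa (f j)

/-- Existential release shape. -/
def EshR (T : Set ℕ) (Aa Bb : St5 → Prop) (s : St5) : Prop :=
  ∃ f : ℕ → St5, f 0 = s ∧ Vd Pp f ∧ ∀ i ∈ T, Bb (f i) ∨ ∃ j < i, Aa (f j)

end Model

/-- The effective position set of an automaton in the single–action setting. -/
def Tset (lang : A → Set (List Γ)) (γ₀ : Γ) (a : A) : Set ℕ :=
  {k | List.replicate (k+1) γ₀ ∈ lang a}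

section Char

variable (lang : A → Set (List Γ)) (q : AP) (γ₀ : Γ) (Pp : ℕ → Prop)

lemma M5_acts (π : KPath (M5 (AP := AP) q γ₀ Pp)) (i : ℕ) : π.acts i = γ₀ :=
  (π.step i).2

lemma M5_actionsUpTo (π : KPath (M5 (AP := AP) q γ₀ Pp)) (k : ℕ) :
    π.actionsUpTo k = List.replicate (k+1) γ₀ := by
  unfold KPath.actionsUpTo
  rw [List.eq_replicate_iff]
  refine ⟨by simp, ?_⟩
  intro b hb
  simp only [List.mem_map, List.mem_range] at hb
  obtain ⟨j, _, hj⟩ := hb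
  rw [← hj]; exact M5_acts q γ₀ Pp π j

lemma M5_mem_lang_iff (π : KPath (M5 (AP := AP) q γ₀ Pp)) (k : ℕ) (a : A) :
    π.actionsUpTo k ∈ lang a ↔ k ∈ Tset lang γ₀ a := by
  rw [M5_actionsUpTo]; rfl

/-- Build a path from a valid run. -/
def runPath (f : ℕ → St5) (hf : Vd Pp f) : KPath (M5 (AP := AP) q γ₀ Pp) where
  states := f
  acts := fun _ => γ₀
  step := fun i => ⟨hf i, rfl⟩

@[simp] lemma runPath_states (f : ℕ → St5) (hf : Vd Pp f) :
    (runPath (AP := AP) q γ₀ Pp f hf).states = f := rfl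

lemma path_valid (π : KPath (M5 (AP := AP) q γ₀ Pp)) : Vd Pp π.states :=
  fun i => (π.step i).1

lemma sat_eu_iff (a : {x // x ∈ Va}) (α β : CTLF2 AP A Va Wa) (s : St5) :
    CTLF2.Sat lang (M5 q γ₀ Pp) (.eu a α β) s ↔
      EshU Pp (Tset lang γ₀ a.1) (CTLF2.Sat lang (M5 q γ₀ Pp) α)
        (CTLF2.Sat lang (M5 q γ₀ Pp) β) s := by
  constructor
  · rintro ⟨π, h0, k, hk, hj, ha⟩
    exact ⟨π.states, h0, path_valid q γ₀ Pp π, k,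
      (M5_mem_lang_iff lang q γ₀ Pp π k a.1).1 ha, hk, hj⟩
  · rintro ⟨f, h0, hv, k, hkT, hB, hA⟩
    exact ⟨runPath q γ₀ Pp f hv, h0, k, hB, hA,
      (M5_mem_lang_iff lang q γ₀ Pp (runPath q γ₀ Pp f hv) k a.1).2 hkT⟩

lemma sat_er_iff (a : {x // x ∈ Wa}) (α β : CTLF2 AP A Va Wa) (s : St5) :
    CTLF2.Sat lang (M5 q γ₀ Pp) (.er a α β) s ↔
      EshR Pp (Tset lang γ₀ a.1) (CTLF2.Sat lang (M5 q γ₀ Pp) α)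
        (CTLF2.Sat lang (M5 q γ₀ Pp) β) s := by
  constructor
  · rintro ⟨π, h0, H⟩
    refine ⟨π.states, h0, path_valid q γ₀ Pp π, fun i hi => ?_⟩
    rcases H i with h | h | h
    · exact absurd ((M5_mem_lang_iff lang q γ₀ Pp π i a.1).2 hi) h
    · exact Or.inl h
    · exact Or.inr h
  · rintro ⟨f, h0, hv, H⟩
    refine ⟨runPath q γ₀ Pp f hv, h0, fun i => ?_⟩
    by_cases hi : i ∈ Tset lang γ₀ a.1
    · rcases H i hi with h | h
      · exact Or.inr (Or.inl h)
      · exact Or.inr (Or.inr h)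
    · exact Or.inl (fun hmem =>
        hi ((M5_mem_lang_iff lang q γ₀ Pp (runPath q γ₀ Pp f hv) i a.1).1 hmem))

lemma not_sat_au_iff (a : {x // x ∈ Va}) (α β : CTLF2 AP A Va Wa) (s : St5) :
    ¬ CTLF2.Sat lang (M5 q γ₀ Pp) (.au a α β) s ↔
      EshR Pp (Tset lang γ₀ a.1) (fun u => ¬ CTLF2.Sat lang (M5 q γ₀ Pp) α u)
        (fun u => ¬ CTLF2.Sat lang (M5 q γ₀ Pp) β u) s := by
  constructor
  · intro h
    simp only [CTLF2.Sat] at h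
    push_neg at h
    obtain ⟨π, h0, H⟩ := h
    refine ⟨π.states, h0, path_valid q γ₀ Pp π, fun i hi => ?_⟩
    rcases Classical.em (CTLF2.Sat lang (M5 q γ₀ Pp) β (π.states i)) with hb | hb
    · rcases Classical.em (∀ j < i, CTLF2.Sat lang (M5 q γ₀ Pp) α (π.states j)) with hall | hall
      · exact absurd ((M5_mem_lang_iff lang q γ₀ Pp π i a.1).2 hi) (H i hb hall)
      · push_neg at hall
        obtain ⟨j, hj, hja⟩ := hall
        exact Or.inr ⟨j, hj, hja⟩
    · exact Or.inl hb
  · rintro ⟨f, h0, hv, H⟩ hsat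
    obtain ⟨k, hk, hj, ha⟩ := hsat (runPath q γ₀ Pp f hv) h0
    have hkT : k ∈ Tset lang γ₀ a.1 :=
      (M5_mem_lang_iff lang q γ₀ Pp (runPath q γ₀ Pp f hv) k a.1).1 ha
    rcases H k hkT with h | ⟨j', hj', hj'a⟩
    · exact h hk
    · exact hj'a (hj j' hj')

lemma not_sat_ar_iff (a : {x // x ∈ Wa}) (α β : CTLF2 AP A Va Wa) (s : St5) :
    ¬ CTLF2.Sat lang (M5 q γ₀ Pp) (.ar a α β) s ↔
      EshU Pp (Tset lang γ₀ a.1) (fun u => ¬ CTLF2.Sat lang (M5 q γ₀ Pp) α u)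
        (fun u => ¬ CTLF2.Sat lang (M5 q γ₀ Pp) β u) s := by
  constructor
  · intro h
    simp only [CTLF2.Sat] at h
    push_neg at h
    obtain ⟨π, h0, i, hmem, hb, hesc⟩ := h
    refine ⟨π.states, h0, path_valid q γ₀ Pp π, i,
      (M5_mem_lang_iff lang q γ₀ Pp π i a.1).1 hmem, hb, fun j hj => ?_⟩
    intro hja
    exact (hesc j hj) hja
  · rintro ⟨f, h0, hv, k, hkT, hB, hA⟩ hsat
    rcases hsat (runPath q γ₀ Pp f hv) h0 k with h | h | ⟨j, hj, hja⟩
    · exact h ((M5_mem_lang_iff lang q γ₀ Pp (runPath q γ₀ Pp f hv) k a.1).2 hkT)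
    · exact hB h
    · exact (hA j hj) hja

end Char


section StabSec

variable (Pp : ℕ → Prop)

/-- Eventual stability of a state predicate. -/
def StabP (Aa : St5 → Prop) : Prop :=
  (∃ N, ∀ n n', N ≤ n → N ≤ n' → (Aa (.Z n) ↔ Aa (.Z n'))) ∧
  (∃ N, ∀ m m', N ≤ m → N ≤ m' → (Aa (.Y m) ↔ Aa (.Y m'))) ∧
  (∀ t, ¬ Pp t → ∃ N, ∀ n, N ≤ n → (Aa (.Bc t) ↔ Aa (.Z n))) ∧
  (∀ t, Pp t → ∃ N, ∀ m, N ≤ m → (Aa (.Bc t) ↔ Aa (.Y m)))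

lemma StabP.negP {Aa : St5 → Prop} (h : StabP Pp Aa) : StabP Pp (fun s => ¬ Aa s) := by
  obtain ⟨⟨N1, h1⟩, ⟨N2, h2⟩, h3, h4⟩ := h
  refine ⟨⟨N1, fun n n' hn hn' => not_congr (h1 n n' hn hn')⟩,
    ⟨N2, fun m m' hm hm' => not_congr (h2 m m' hm hm')⟩, fun t ht => ?_, fun t ht => ?_⟩
  · obtain ⟨N, hN⟩ := h3 t ht
    exact ⟨N, fun n hn => not_congr (hN n hn)⟩
  · obtain ⟨N, hN⟩ := h4 t ht
    exact ⟨N, fun m hm => not_congr (hN m hm)⟩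

lemma StabP.conjP {Aa Bb : St5 → Prop} (hA : StabP Pp Aa) (hB : StabP Pp Bb) :
    StabP Pp (fun s => Aa s ∧ Bb s) := by
  obtain ⟨⟨N1, h1⟩, ⟨N2, h2⟩, h3, h4⟩ := hA
  obtain ⟨⟨M1, g1⟩, ⟨M2, g2⟩, g3, g4⟩ := hB
  refine ⟨⟨max N1 M1, fun n n' hn hn' =>
      and_congr (h1 n n' (le_trans (le_max_left _ _) hn) (le_trans (le_max_left _ _) hn'))
        (g1 n n' (le_trans (le_max_right _ _) hn) (le_trans (le_max_right _ _) hn'))⟩,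
    ⟨max N2 M2, fun m m' hm hm' =>
      and_congr (h2 m m' (le_trans (le_max_left _ _) hm) (le_trans (le_max_left _ _) hm'))
        (g2 m m' (le_trans (le_max_right _ _) hm) (le_trans (le_max_right _ _) hm'))⟩,
    fun t ht => ?_, fun t ht => ?_⟩
  · obtain ⟨N, hN⟩ := h3 t ht
    obtain ⟨M, hM⟩ := g3 t ht
    exact ⟨max N M, fun n hn => and_congr (hN n (le_trans (le_max_left _ _) hn))
      (hM n (le_trans (le_max_right _ _) hn))⟩
  · obtain ⟨N, hN⟩ := h4 t ht
    obtain ⟨M, hM⟩ := g4 t ht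
    exact ⟨max N M, fun m hm => and_congr (hN m (le_trans (le_max_left _ _) hm))
      (hM m (le_trans (le_max_right _ _) hm))⟩

lemma StabP.congrP {Aa Bb : St5 → Prop} (hiff : ∀ s, Aa s ↔ Bb s) (h : StabP Pp Aa) :
    StabP Pp Bb := by
  obtain ⟨⟨N1, h1⟩, ⟨N2, h2⟩, h3, h4⟩ := h
  refine ⟨⟨N1, fun n n' hn hn' => (hiff _).symm.trans ((h1 n n' hn hn').trans (hiff _))⟩,
    ⟨N2, fun m m' hm hm' => (hiff _).symm.trans ((h2 m m' hm hm').trans (hiff _))⟩,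
    fun t ht => ?_, fun t ht => ?_⟩
  · obtain ⟨N, hN⟩ := h3 t ht
    exact ⟨N, fun n hn => (hiff _).symm.trans ((hN n hn).trans (hiff _))⟩
  · obtain ⟨N, hN⟩ := h4 t ht
    exact ⟨N, fun m hm => (hiff _).symm.trans ((hN m hm).trans (hiff _))⟩

/-- A single threshold covering all stability requirements up to chain position `T₀`. -/
lemma StabP.bigN {Aa : St5 → Prop} (h : StabP Pp Aa) (T₀ : ℕ) :
    ∃ N, (∀ n n', N ≤ n → N ≤ n' → (Aa (.Z n) ↔ Aa (.Z n'))) ∧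
         (∀ m m', N ≤ m → N ≤ m' → (Aa (.Y m) ↔ Aa (.Y m'))) ∧
         (∀ t, t ≤ T₀ → ¬ Pp t → ∀ n, N ≤ n → (Aa (.Bc t) ↔ Aa (.Z n))) ∧
         (∀ t, t ≤ T₀ → Pp t → ∀ m, N ≤ m → (Aa (.Bc t) ↔ Aa (.Y m))) := by
  obtain ⟨⟨N1, h1⟩, ⟨N2, h2⟩, h3, h4⟩ := h
  classical
  set g : ℕ → ℕ := fun t => if ht : ¬ Pp t then Classical.choose (h3 t ht) else 0 with hg
  set g' : ℕ → ℕ := fun t => if ht : Pp t then Classical.choose (h4 t ht) else 0 with hg'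
  refine ⟨max (max N1 N2) ((Finset.range (T₀+1)).sup (fun t => max (g t) (g' t))), ?_, ?_, ?_, ?_⟩
  · intro n n' hn hn'
    exact h1 n n' (le_trans (le_trans (le_max_left _ _) (le_max_left _ _)) hn)
      (le_trans (le_trans (le_max_left _ _) (le_max_left _ _)) hn')
  · intro m m' hm hm'
    exact h2 m m' (le_trans (le_trans (le_max_right _ _) (le_max_left _ _)) hm)
      (le_trans (le_trans (le_max_right _ _) (le_max_left _ _)) hm')
  · intro t ht hPt n hn
    have hmem : t ∈ Finset.range (T₀+1) := Finset.mem_range.mpr (by omega)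
    have hsup : max (g t) (g' t) ≤ (Finset.range (T₀+1)).sup (fun t => max (g t) (g' t)) :=
      Finset.le_sup (f := fun t => max (g t) (g' t)) hmem
    have hgt : g t ≤ (Finset.range (T₀+1)).sup (fun t => max (g t) (g' t)) :=
      le_trans (le_max_left _ _) hsup
    have : g t ≤ n := le_trans hgt (le_trans (le_max_right _ _) hn)
    have hspec := Classical.choose_spec (h3 t hPt)
    have hgeq : g t = Classical.choose (h3 t hPt) := by simp [hg, hPt]
    exact hspec n (by rw [← hgeq]; exact this)
  · intro t ht hPt m hm
    have hmem : t ∈ Finset.range (T₀+1) := Finset.mem_range.mpr (by omega)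
    have hsup : max (g t) (g' t) ≤ (Finset.range (T₀+1)).sup (fun t => max (g t) (g' t)) :=
      Finset.le_sup (f := fun t => max (g t) (g' t)) hmem
    have hgt : g' t ≤ (Finset.range (T₀+1)).sup (fun t => max (g t) (g' t)) :=
      le_trans (le_max_right _ _) hsup
    have : g' t ≤ m := le_trans hgt (le_trans (le_max_right _ _) hm)
    have hspec := Classical.choose_spec (h4 t hPt)
    have hgeq : g' t = Classical.choose (h4 t hPt) := by simp [hg', hPt]
    exact hspec m (by rw [← hgeq]; exact this)

/-- An eventually monotone boolean sequence stabilises. -/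
lemma mono_stab (Q : ℕ → Prop) (N₀ : ℕ) (h : ∀ n n', N₀ ≤ n → n ≤ n' → Q n → Q n') :
    ∃ N, N₀ ≤ N ∧ ∀ n n', N ≤ n → N ≤ n' → (Q n ↔ Q n') := by
  by_cases hex : ∃ n, N₀ ≤ n ∧ Q n
  · obtain ⟨n₀, hn₀, hq⟩ := hex
    refine ⟨n₀, hn₀, fun n n' hn hn' => iff_of_true (h n₀ n hn₀ hn hq) (h n₀ n' hn₀ hn' hq)⟩
  · push_neg at hex
    exact ⟨N₀, le_refl _, fun n n' hn hn' =>
      iff_of_false (hex n (le_trans (le_refl _) hn)) (hex n' hn')⟩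

/-- Head replacement for `EshU`. -/
lemma EshU_head {T : Set ℕ} {Aa Bb : St5 → Prop} {s s' : St5}
    (hE : ∀ u, E5 Pp s u → E5 Pp s' u)
    (hA : Aa s ↔ Aa s') (hB : Bb s ↔ Bb s') :
    EshU Pp T Aa Bb s → EshU Pp T Aa Bb s' := by
  rintro ⟨f, h0, hv, k, hkT, hB', hA'⟩
  refine ⟨fun i => if i = 0 then s' else f i, by simp, ?_, k, hkT, ?_, ?_⟩
  · intro i
    rcases i with _ | i
    · simpa using hE (f 1) (by have := hv 0; rwa [h0] at this)
    · simpa using hv (i+1)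
  · rcases k with _ | k
    · simpa using hB.mp (h0 ▸ hB')
    · simpa using hB'
  · intro j hj
    rcases j with _ | j
    · simpa using hA.mp (h0 ▸ hA' 0 hj)
    · simpa using hA' (j+1) hj

/-- Head replacement for `EshR`. -/
lemma EshR_head {T : Set ℕ} {Aa Bb : St5 → Prop} {s s' : St5}
    (hE : ∀ u, E5 Pp s u → E5 Pp s' u)
    (hA : Aa s ↔ Aa s') (hB : Bb s ↔ Bb s') :
    EshR Pp T Aa Bb s → EshR Pp T Aa Bb s' := by
  rintro ⟨f, h0, hv, H⟩
  refine ⟨fun i => if i = 0 then s' else f i, by simp, ?_, ?_⟩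
  · intro i
    rcases i with _ | i
    · simpa using hE (f 1) (by have := hv 0; rwa [h0] at this)
    · simpa using hv (i+1)
  · intro i hi
    rcases H i hi with h | ⟨j, hj, hja⟩
    · rcases i with _ | i
      · exact Or.inl (by simpa using hB.mp (h0 ▸ h))
      · exact Or.inl (by simpa using h)
    · rcases j with _ | j
      · exact Or.inr ⟨0, hj, by simpa using hA.mp (h0 ▸ hja)⟩
      · exact Or.inr ⟨j+1, hj, by simpa using hja⟩

/-! #### The chain mimicry construction -/

def isBc : St5 → Prop
  | .Bc _ => True
  | _ => False

def cIdx : St5 → ℕ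
  | .Bc t => t
  | _ => 0

def bud5 : St5 → ℕ
  | .Z n => n
  | .Y m => m
  | .Bc _ => 0

lemma isBc_eq {s : St5} (h : isBc s) : s = .Bc (cIdx s) := by
  cases s <;> simp_all [isBc, cIdx]

lemma Bc_step {u : St5} {t1 : ℕ} (h : E5 Pp (.Bc t1) u) (hB : isBc u) :
    u = .Bc (t1+1) ∨ (u = .Bc t1 ∧ ¬ Pp t1) := by
  rcases E5_Bc_inv Pp h with h1 | h1 | ⟨j, h1⟩ | ⟨m', h1, _⟩
  · exact Or.inl h1
  · exact Or.inr h1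
  · rw [h1] at hB; simp [isBc] at hB
  · rw [h1] at hB; simp [isBc] at hB

lemma cIdx_step {f : ℕ → St5} (hv : Vd Pp f) (i : ℕ)
    (h1 : isBc (f i)) (h2 : isBc (f (i+1))) :
    cIdx (f (i+1)) = cIdx (f i) + 1 ∨
      (cIdx (f (i+1)) = cIdx (f i) ∧ ¬ Pp (cIdx (f i))) := by
  have hstep := hv i
  rw [isBc_eq h1] at hstep
  rcases Bc_step Pp hstep h2 with h | ⟨h, hp⟩
  · left; rw [h]; simp [cIdx]
  · right; rw [h]; simp [cIdx]; exact hp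

lemma cIdx_le {f : ℕ → St5} (hv : Vd Pp f) {t : ℕ} (h0 : f 0 = .Bc t) :
    ∀ i, (∀ j, j ≤ i → isBc (f j)) → cIdx (f i) ≤ t + i := by
  intro i
  induction i with
  | zero => intro _; rw [h0]; simp [cIdx]
  | succ n ih =>
      intro hall
      have h1 := hall n (by omega)
      have h2 := hall (n+1) (le_refl _)
      rcases cIdx_step Pp hv n h1 h2 with h | ⟨h, _⟩
      · rw [h]
        have := ih (fun j hj => hall j (by omega))
        omega
      · rw [h]
        have := ih (fun j hj => hall j (by omega))
        omega

def RelC (NN Tb : ℕ) : St5 → St5 → Prop := fun u v =>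
  ∃ t', t' ≤ Tb ∧ u = .Bc t' ∧
    ((¬ Pp t' ∧ ∃ n', v = .Z n' ∧ NN ≤ n') ∨ (Pp t' ∧ ∃ m', v = .Y m' ∧ NN ≤ m'))

lemma chain_mimic (hNA : ∀ u, ¬ (Pp u ∧ Pp (u+1))) (t : ℕ) (f : ℕ → St5)
    (h0 : f 0 = .Bc t) (hv : Vd Pp f) (k NN : ℕ) :
    ∃ n₀, ∀ n, n₀ ≤ n → ∃ f' : ℕ → St5,
      f' 0 = (if Pp t then St5.Y n else St5.Z n) ∧ Vd Pp f' ∧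
      ((∀ i, i ≤ k → RelC Pp NN (t + k) (f i) (f' i)) ∨
       (∃ e, 1 ≤ e ∧ e ≤ k ∧ (∀ i, i < e → RelC Pp NN (t + k) (f i) (f' i)) ∧
         ∀ i, e ≤ i → f' i = f i)) := by
  classical
  by_cases hesc : ∃ i, i ≤ k ∧ ¬ isBc (f i)
  · -- escape within the horizon
    obtain ⟨e, ⟨hek, heB⟩, hmin⟩ :
        ∃ e, (e ≤ k ∧ ¬ isBc (f e)) ∧ ∀ i, i < e → ¬(i ≤ k ∧ ¬ isBc (f i)) :=
      ⟨Nat.find hesc, Nat.find_spec hesc, fun i hi => Nat.find_min hesc hi⟩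
    have hpre : ∀ i, i < e → isBc (f i) := by
      intro i hi
      by_contra hB
      exact hmin i hi ⟨by omega, hB⟩
    have he1 : 1 ≤ e := by
      by_contra h
      have h0e : e = 0 := by omega
      apply heB
      rw [h0e, h0]
      simp [isBc]
    refine ⟨k + NN + bud5 (f e) + 2, fun n hn => ?_⟩
    refine ⟨fun i => if i < e then
        (if Pp (cIdx (f i)) then St5.Y (n - i) else St5.Z (n - i)) else f i, ?_, ?_, ?_⟩
    · have h0' : (0 : ℕ) < e := by omega
      simp only [if_pos h0', h0]
      simp [cIdx]
    · intro i
      by_cases hi1 : i + 1 < e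
      · have hi : i < e := by omega
        have hBi := hpre i hi
        have hBi1 := hpre (i+1) hi1
        simp only [if_pos hi, if_pos hi1]
        rcases cIdx_step Pp hv i hBi hBi1 with hstep | ⟨hstep, hnp⟩
        · by_cases hp : Pp (cIdx (f i))
          · have hp1 : ¬ Pp (cIdx (f (i+1))) := by
              rw [hstep]; intro hcon; exact hNA _ ⟨hp, hcon⟩
            simp only [if_pos hp, if_neg hp1]
            show n - (i+1) ≤ n - i
            omega
          · by_cases hp1 : Pp (cIdx (f (i+1)))
            · simp only [if_neg hp, if_pos hp1]
              show n - (i+1) < n - i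
              omega
            · simp only [if_neg hp, if_neg hp1]
              show n - (i+1) ≤ n - i
              omega
        · rw [hstep]
          simp only [if_neg hnp]
          show n - (i+1) ≤ n - i
          omega
      · by_cases hie : i < e
        · -- i = e - 1, step into the escape state
          have hieq : i + 1 = e := by omega
          have hBi := hpre i hie
          simp only [if_pos hie, if_neg (by omega : ¬ i + 1 < e)]
          have hstep := hv i
          rw [isBc_eq hBi] at hstep
          rcases E5_Bc_inv Pp hstep with h1 | ⟨h1, hnp⟩ | ⟨j, h1⟩ | ⟨m', h1, hnp⟩
          · exfalso; apply heB; rw [← hieq, h1]; simp [isBc]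
          · exfalso; apply heB; rw [← hieq, h1]; simp [isBc]
          · have hj : j ≤ n - i := by
              have : bud5 (f e) = j := by rw [← hieq, h1]; simp [bud5]
              omega
            rw [h1]
            by_cases hp : Pp (cIdx (f i))
            · simp only [if_pos hp]; exact hj
            · simp only [if_neg hp]; exact hj
          · have hm : m' < n - i := by
              have : bud5 (f e) = m' := by rw [← hieq, h1]; simp [bud5]
              omega
            rw [h1]
            simp only [if_neg hnp]
            exact hm
        · -- i ≥ e
          simp only [if_neg hie, if_neg (by omega : ¬ i + 1 < e)]
          exact hv i
    · right
      refine ⟨e, he1, hek, fun i hi => ?_, fun i hi => by simp [Nat.not_lt.mpr hi]⟩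
      have hBi := hpre i hi
      refine ⟨cIdx (f i), ?_, isBc_eq hBi, ?_⟩
      · have := cIdx_le Pp hv h0 i (fun j hj => hpre j (by omega))
        omega
      · simp only [if_pos hi]
        by_cases hp : Pp (cIdx (f i))
        · exact Or.inr ⟨hp, n - i, by simp [if_pos hp], by omega⟩
        · exact Or.inl ⟨hp, n - i, by simp [if_neg hp], by omega⟩
  · -- the run stays on the chain throughout the horizon
    push_neg at hesc
    refine ⟨k + NN + 2, fun n hn => ?_⟩
    refine ⟨fun i => if i ≤ k then
        (if Pp (cIdx (f i)) then St5.Y (n - i) else St5.Z (n - i)) else .Z 0, ?_, ?_, ?_⟩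
    · have h0' : (0 : ℕ) ≤ k := by omega
      simp only [if_pos h0', h0]
      simp [cIdx]
    · intro i
      by_cases hi1 : i + 1 ≤ k
      · have hi : i ≤ k := by omega
        have hBi := hesc i hi
        have hBi1 := hesc (i+1) hi1
        simp only [if_pos hi, if_pos hi1]
        rcases cIdx_step Pp hv i hBi hBi1 with hstep | ⟨hstep, hnp⟩
        · by_cases hp : Pp (cIdx (f i))
          · have hp1 : ¬ Pp (cIdx (f (i+1))) := by
              rw [hstep]; intro hcon; exact hNA _ ⟨hp, hcon⟩
            simp only [if_pos hp, if_neg hp1]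
            show n - (i+1) ≤ n - i
            omega
          · by_cases hp1 : Pp (cIdx (f (i+1)))
            · simp only [if_neg hp, if_pos hp1]
              show n - (i+1) < n - i
              omega
            · simp only [if_neg hp, if_neg hp1]
              show n - (i+1) ≤ n - i
              omega
        · rw [hstep]
          simp only [if_neg hnp]
          show n - (i+1) ≤ n - i
          omega
      · by_cases hi : i ≤ k
        · simp only [if_pos hi, if_neg hi1]
          by_cases hp : Pp (cIdx (f i))
          · simp only [if_pos hp]
            show E5 Pp (St5.Y (n - i)) (St5.Z 0)
            simp [E5]
          · simp only [if_neg hp]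
            show E5 Pp (St5.Z (n - i)) (St5.Z 0)
            simp [E5]
        · simp only [if_neg hi, if_neg hi1]
          show E5 Pp (St5.Z 0) (St5.Z 0)
          simp [E5]
    · left
      intro i hi
      have hBi := hesc i hi
      refine ⟨cIdx (f i), ?_, isBc_eq hBi, ?_⟩
      · have := cIdx_le Pp hv h0 i (fun j hj => hesc j (by omega))
        omega
      · simp only [if_pos hi]
        by_cases hp : Pp (cIdx (f i))
        · exact Or.inr ⟨hp, n - i, by simp [if_pos hp], by omega⟩
        · exact Or.inl ⟨hp, n - i, by simp [if_neg hp], by omega⟩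

end StabSec


section Transfer

variable {Pp : ℕ → Prop}

lemma RelC_transfer {Aa : St5 → Prop} {NN Tb : ℕ} {u v : St5}
    (h3 : ∀ t', t' ≤ Tb → ¬ Pp t' → ∀ n, NN ≤ n → (Aa (.Bc t') ↔ Aa (.Z n)))
    (h4 : ∀ t', t' ≤ Tb → Pp t' → ∀ m, NN ≤ m → (Aa (.Bc t') ↔ Aa (.Y m)))
    (hrel : RelC Pp NN Tb u v) : Aa u ↔ Aa v := by
  obtain ⟨t', htb, hu, hcase⟩ := hrel
  rcases hcase with ⟨hp, n', hv', hn⟩ | ⟨hp, m', hv', hm⟩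
  · rw [hu, hv']; exact h3 t' htb hp n' hn
  · rw [hu, hv']; exact h4 t' htb hp m' hm

/-- Value transfer along the mimicry specification. -/
lemma spec_value {Aa : St5 → Prop} {NN Tb k : ℕ} {f f' : ℕ → St5}
    (hspec : (∀ i, i ≤ k → RelC Pp NN Tb (f i) (f' i)) ∨
      (∃ e, 1 ≤ e ∧ e ≤ k ∧ (∀ i, i < e → RelC Pp NN Tb (f i) (f' i)) ∧
        ∀ i, e ≤ i → f' i = f i))
    (h3 : ∀ t', t' ≤ Tb → ¬ Pp t' → ∀ n, NN ≤ n → (Aa (.Bc t') ↔ Aa (.Z n)))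
    (h4 : ∀ t', t' ≤ Tb → Pp t' → ∀ m, NN ≤ m → (Aa (.Bc t') ↔ Aa (.Y m)))
    {i : ℕ} (hi : i ≤ k) : Aa (f i) ↔ Aa (f' i) := by
  rcases hspec with h | ⟨e, _, _, hrel, hid⟩
  · exact RelC_transfer h3 h4 (h i hi)
  · by_cases hie : i < e
    · exact RelC_transfer h3 h4 (hrel i hie)
    · rw [hid i (by omega)]

/-- Stability of the existential until shape. -/
lemma EshU_StabP (hNA : ∀ u, ¬ (Pp u ∧ Pp (u+1))) (T : Set ℕ) {Aa Bb : St5 → Prop}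
    (hA : StabP Pp Aa) (hB : StabP Pp Bb) : StabP Pp (EshU Pp T Aa Bb) := by
  classical
  obtain ⟨⟨NA, hAZ⟩, ⟨NAY, hAY⟩, hA3, hA4⟩ := hA
  obtain ⟨⟨NB, hBZ⟩, ⟨NBY, hBY⟩, hB3, hB4⟩ := hB
  have hAst : StabP Pp Aa := ⟨⟨NA, hAZ⟩, ⟨NAY, hAY⟩, hA3, hA4⟩
  have hBst : StabP Pp Bb := ⟨⟨NB, hBZ⟩, ⟨NBY, hBY⟩, hB3, hB4⟩
  refine ⟨?_, ?_, ?_, ?_⟩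
  · -- Z stability
    obtain ⟨N, _, hN⟩ := mono_stab (fun n => EshU Pp T Aa Bb (.Z n)) (max NA NB)
      (fun n n' hn hnn' h => EshU_head Pp (fun u hu => E5_Z_up Pp hu hnn')
        (hAZ n n' (by omega) (by omega)) (hBZ n n' (by omega) (by omega)) h)
    exact ⟨N, hN⟩
  · -- Y stability
    obtain ⟨N, _, hN⟩ := mono_stab (fun m => EshU Pp T Aa Bb (.Y m)) (max NAY NBY)
      (fun m m' hm hmm' h => EshU_head Pp (fun u hu => E5_Y_up Pp hu hmm')
        (hAY m m' (by omega) (by omega)) (hBY m m' (by omega) (by omega)) h)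
    exact ⟨N, hN⟩
  · -- chain states off the chain positions
    intro t ht
    obtain ⟨NA3, hNA3⟩ := hA3 t ht
    obtain ⟨NB3, hNB3⟩ := hB3 t ht
    have hback : ∀ n, max NA3 NB3 ≤ n →
        EshU Pp T Aa Bb (.Z n) → EshU Pp T Aa Bb (.Bc t) := by
      intro n hn h
      exact EshU_head Pp (fun u hu => E5_Bc_from_Z Pp hu ht)
        ((hNA3 n (by omega)).symm) ((hNB3 n (by omega)).symm) h
    by_cases hBc : EshU Pp T Aa Bb (.Bc t)
    · obtain ⟨f, h0, hv, k, hkT, hBk, hAj⟩ := hBc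
      obtain ⟨NNA, _, _, hA3', hA4'⟩ := StabP.bigN Pp hAst (t + k)
      obtain ⟨NNB, _, _, hB3', hB4'⟩ := StabP.bigN Pp hBst (t + k)
      set NN := max NNA NNB with hNN
      have hA3'' : ∀ t', t' ≤ t + k → ¬ Pp t' → ∀ n, NN ≤ n → (Aa (.Bc t') ↔ Aa (.Z n)) :=
        fun t' h1 h2 n hn => hA3' t' h1 h2 n (by omega)
      have hA4'' : ∀ t', t' ≤ t + k → Pp t' → ∀ m, NN ≤ m → (Aa (.Bc t') ↔ Aa (.Y m)) :=
        fun t' h1 h2 m hm => hA4' t' h1 h2 m (by omega)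
      have hB3'' : ∀ t', t' ≤ t + k → ¬ Pp t' → ∀ n, NN ≤ n → (Bb (.Bc t') ↔ Bb (.Z n)) :=
        fun t' h1 h2 n hn => hB3' t' h1 h2 n (by omega)
      have hB4'' : ∀ t', t' ≤ t + k → Pp t' → ∀ m, NN ≤ m → (Bb (.Bc t') ↔ Bb (.Y m)) :=
        fun t' h1 h2 m hm => hB4' t' h1 h2 m (by omega)
      obtain ⟨n₀, hmim⟩ := chain_mimic Pp hNA t f h0 hv k NN
      refine ⟨max n₀ (max NA3 NB3), fun n hn => ?_⟩
      have hfor : EshU Pp T Aa Bb (.Z n) := by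
        obtain ⟨f', hf'0, hf'v, hspec⟩ := hmim n (by omega)
        rw [if_neg ht] at hf'0
        refine ⟨f', hf'0, hf'v, k, hkT, ?_, ?_⟩
        · exact (spec_value hspec hB3'' hB4'' (le_refl k)).1 hBk
        · intro j hj
          exact (spec_value hspec hA3'' hA4'' (by omega : j ≤ k)).1 (hAj j hj)
      exact iff_of_true ⟨f, h0, hv, k, hkT, hBk, hAj⟩ hfor
    · refine ⟨max NA3 NB3, fun n hn => ?_⟩
      exact iff_of_false hBc (fun h => hBc (hback n hn h))
  · -- chain states on the chain positions
    intro t ht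
    obtain ⟨NA4, hNA4⟩ := hA4 t ht
    obtain ⟨NB4, hNB4⟩ := hB4 t ht
    have hback : ∀ m, max NA4 NB4 ≤ m →
        EshU Pp T Aa Bb (.Y m) → EshU Pp T Aa Bb (.Bc t) := by
      intro m hm h
      exact EshU_head Pp (fun u hu => E5_Bc_from_Y Pp hu)
        ((hNA4 m (by omega)).symm) ((hNB4 m (by omega)).symm) h
    by_cases hBc : EshU Pp T Aa Bb (.Bc t)
    · obtain ⟨f, h0, hv, k, hkT, hBk, hAj⟩ := hBc
      obtain ⟨NNA, _, _, hA3', hA4'⟩ := StabP.bigN Pp hAst (t + k)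
      obtain ⟨NNB, _, _, hB3', hB4'⟩ := StabP.bigN Pp hBst (t + k)
      set NN := max NNA NNB with hNN
      have hA3'' : ∀ t', t' ≤ t + k → ¬ Pp t' → ∀ n, NN ≤ n → (Aa (.Bc t') ↔ Aa (.Z n)) :=
        fun t' h1 h2 n hn => hA3' t' h1 h2 n (by omega)
      have hA4'' : ∀ t', t' ≤ t + k → Pp t' → ∀ m, NN ≤ m → (Aa (.Bc t') ↔ Aa (.Y m)) :=
        fun t' h1 h2 m hm => hA4' t' h1 h2 m (by omega)
      have hB3'' : ∀ t', t' ≤ t + k → ¬ Pp t' → ∀ n, NN ≤ n → (Bb (.Bc t') ↔ Bb (.Z n)) :=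
        fun t' h1 h2 n hn => hB3' t' h1 h2 n (by omega)
      have hB4'' : ∀ t', t' ≤ t + k → Pp t' → ∀ m, NN ≤ m → (Bb (.Bc t') ↔ Bb (.Y m)) :=
        fun t' h1 h2 m hm => hB4' t' h1 h2 m (by omega)
      obtain ⟨n₀, hmim⟩ := chain_mimic Pp hNA t f h0 hv k NN
      refine ⟨max n₀ (max NA4 NB4), fun n hn => ?_⟩
      have hfor : EshU Pp T Aa Bb (.Y n) := by
        obtain ⟨f', hf'0, hf'v, hspec⟩ := hmim n (by omega)
        rw [if_pos ht] at hf'0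
        refine ⟨f', hf'0, hf'v, k, hkT, ?_, ?_⟩
        · exact (spec_value hspec hB3'' hB4'' (le_refl k)).1 hBk
        · intro j hj
          exact (spec_value hspec hA3'' hA4'' (by omega : j ≤ k)).1 (hAj j hj)
      exact iff_of_true ⟨f, h0, hv, k, hkT, hBk, hAj⟩ hfor
    · refine ⟨max NA4 NB4, fun m hm => ?_⟩
      exact iff_of_false hBc (fun h => hBc (hback m hm h))


/-- Stability of the existential release shape.  The hypothesis `hDodge` says that if the
position set `T` is unbounded then no chain evolution can have chain `q`-positions at all
of `T`. -/
lemma EshR_StabP (hNA : ∀ u, ¬ (Pp u ∧ Pp (u+1))) (T : Set ℕ)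
    (hDodge : (¬ ∃ H₀, ∀ i ∈ T, i ≤ H₀) → ∀ τ : ℕ → ℕ,
      (∀ i, τ (i+1) = τ i + 1 ∨ (τ (i+1) = τ i ∧ ¬ Pp (τ i))) → ∃ i ∈ T, ¬ Pp (τ i))
    {Aa Bb : St5 → Prop}
    (hA : StabP Pp Aa) (hB : StabP Pp Bb) : StabP Pp (EshR Pp T Aa Bb) := by
  classical
  obtain ⟨⟨NA, hAZ⟩, ⟨NAY, hAY⟩, hA3, hA4⟩ := hA
  obtain ⟨⟨NB, hBZ⟩, ⟨NBY, hBY⟩, hB3, hB4⟩ := hB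
  have hAst : StabP Pp Aa := ⟨⟨NA, hAZ⟩, ⟨NAY, hAY⟩, hA3, hA4⟩
  have hBst : StabP Pp Bb := ⟨⟨NB, hBZ⟩, ⟨NBY, hBY⟩, hB3, hB4⟩
  -- the common forward construction from a chain state
  have hforward : ∀ t, EshR Pp T Aa Bb (.Bc t) →
      ∃ N₁, ∀ n, N₁ ≤ n → EshR Pp T Aa Bb (if Pp t then St5.Y n else St5.Z n) := by
    intro t hBc
    obtain ⟨f, h0, hv, H⟩ := hBc
    by_cases hAex : ∃ i, Aa (f i)
    · -- the release is eventually unlocked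
      set j0 := Nat.find hAex with hj0def
      have hj0A : Aa (f j0) := Nat.find_spec hAex
      have hmin : ∀ j, j < j0 → ¬ Aa (f j) := fun j hj => Nat.find_min hAex hj
      have hBall : ∀ i ∈ T, i ≤ j0 → Bb (f i) := by
        intro i hiT hile
        rcases H i hiT with h | ⟨j, hj, hja⟩
        · exact h
        · exact absurd hja (hmin j (by omega))
      obtain ⟨NNA, _, _, hA3', hA4'⟩ := StabP.bigN Pp hAst (t + j0)
      obtain ⟨NNB, _, _, hB3', hB4'⟩ := StabP.bigN Pp hBst (t + j0)
      set NN := max NNA NNB with hNN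
      have hA3'' : ∀ t', t' ≤ t + j0 → ¬ Pp t' → ∀ n, NN ≤ n → (Aa (.Bc t') ↔ Aa (.Z n)) :=
        fun t' h1 h2 n hn => hA3' t' h1 h2 n (by omega)
      have hA4'' : ∀ t', t' ≤ t + j0 → Pp t' → ∀ m, NN ≤ m → (Aa (.Bc t') ↔ Aa (.Y m)) :=
        fun t' h1 h2 m hm => hA4' t' h1 h2 m (by omega)
      have hB3'' : ∀ t', t' ≤ t + j0 → ¬ Pp t' → ∀ n, NN ≤ n → (Bb (.Bc t') ↔ Bb (.Z n)) :=
        fun t' h1 h2 n hn => hB3' t' h1 h2 n (by omega)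
      have hB4'' : ∀ t', t' ≤ t + j0 → Pp t' → ∀ m, NN ≤ m → (Bb (.Bc t') ↔ Bb (.Y m)) :=
        fun t' h1 h2 m hm => hB4' t' h1 h2 m (by omega)
      obtain ⟨n₀, hmim⟩ := chain_mimic Pp hNA t f h0 hv j0 NN
      refine ⟨n₀, fun n hn => ?_⟩
      obtain ⟨f', hf'0, hf'v, hspec⟩ := hmim n hn
      refine ⟨f', hf'0, hf'v, fun i hiT => ?_⟩
      by_cases hile : i ≤ j0
      · exact Or.inl ((spec_value hspec hB3'' hB4'' hile).1 (hBall i hiT hile))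
      · exact Or.inr ⟨j0, by omega,
          (spec_value hspec hA3'' hA4'' (le_refl j0)).1 hj0A⟩
    · push_neg at hAex
      have hH' : ∀ i ∈ T, Bb (f i) := by
        intro i hiT
        rcases H i hiT with h | ⟨j, _, hja⟩
        · exact h
        · exact absurd hja (hAex j)
      by_cases hTb : ∃ H₀, ∀ i ∈ T, i ≤ H₀
      · -- bounded demands
        obtain ⟨H₀, hH₀⟩ := hTb
        obtain ⟨NNB, _, _, hB3', hB4'⟩ := StabP.bigN Pp hBst (t + H₀)
        obtain ⟨n₀, hmim⟩ := chain_mimic Pp hNA t f h0 hv H₀ NNB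
        refine ⟨n₀, fun n hn => ?_⟩
        obtain ⟨f', hf'0, hf'v, hspec⟩ := hmim n hn
        refine ⟨f', hf'0, hf'v, fun i hiT => ?_⟩
        exact Or.inl ((spec_value hspec hB3' hB4' (hH₀ i hiT)).1 (hH' i hiT))
      · by_cases hesc2 : ∃ i, ¬ isBc (f i)
        · -- the run escapes the chain
          set e := Nat.find hesc2 with hedef
          have heB : ¬ isBc (f e) := Nat.find_spec hesc2
          obtain ⟨NNB, _, _, hB3', hB4'⟩ := StabP.bigN Pp hBst (t + e)
          obtain ⟨n₀, hmim⟩ := chain_mimic Pp hNA t f h0 hv e NNB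
          refine ⟨n₀, fun n hn => ?_⟩
          obtain ⟨f', hf'0, hf'v, hspec⟩ := hmim n hn
          rcases hspec with hrel | ⟨e', he'1, he'e, hrel, hid⟩
          · obtain ⟨t', _, heq, _⟩ := hrel e (le_refl e)
            rw [heq] at heB
            simp [isBc] at heB
          · refine ⟨f', hf'0, hf'v, fun i hiT => ?_⟩
            by_cases hie : i < e'
            · exact Or.inl ((RelC_transfer hB3' hB4' (hrel i hie)).1 (hH' i hiT))
            · exact Or.inl (by rw [hid i (by omega)]; exact hH' i hiT)
        · -- the run stays on the chain forever
          push_neg at hesc2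
          by_cases hval : Bb (.Z NB)
          · -- the stable hub value of `Bb` is true: park
            by_cases hpt : Pp t
            · obtain ⟨NB4, hNB4⟩ := hB4 t hpt
              refine ⟨max NB (max NB4 1), fun n hn => ?_⟩
              rw [if_pos hpt]
              refine ⟨fun i => if i = 0 then .Y n else .Z NB, by simp, ?_, ?_⟩
              · intro i
                rcases i with _ | i
                · simp only [if_pos rfl, if_neg (by omega : ¬ (0:ℕ)+1 = 0)]
                  show NB ≤ n
                  omega
                · simp only [if_neg (by omega : ¬ i+1 = 0),
                    if_neg (by omega : ¬ i+1+1 = 0)]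
                  show NB ≤ NB
                  omega
              · intro i hiT
                rcases i with _ | i
                · refine Or.inl ?_
                  simp only [if_pos rfl]
                  have hb0 : Bb (.Bc t) := by rw [← h0]; exact hH' 0 hiT
                  exact (hNB4 n (by omega)).1 hb0
                · refine Or.inl ?_
                  simp only [if_neg (by omega : ¬ i+1 = 0)]
                  exact hval
            · refine ⟨NB, fun n hn => ?_⟩
              rw [if_neg hpt]
              refine ⟨fun i => if i = 0 then .Z n else .Z NB, by simp, ?_, ?_⟩
              · intro i
                rcases i with _ | i
                · simp only [if_pos rfl, if_neg (by omega : ¬ (0:ℕ)+1 = 0)]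
                  show NB ≤ n
                  omega
                · simp only [if_neg (by omega : ¬ i+1 = 0),
                    if_neg (by omega : ¬ i+1+1 = 0)]
                  show NB ≤ NB
                  omega
              · intro i hiT
                rcases i with _ | i
                · refine Or.inl ?_
                  simp only [if_pos rfl]
                  exact (hBZ NB n (le_refl _) (by omega)).1 hval
                · refine Or.inl ?_
                  simp only [if_neg (by omega : ¬ i+1 = 0)]
                  exact hval
          · -- impossible: unbounded chain coverage contradicts the dodge property
            exfalso
            have hτ : ∀ i, cIdx (f (i+1)) = cIdx (f i) + 1 ∨
                (cIdx (f (i+1)) = cIdx (f i) ∧ ¬ Pp (cIdx (f i))) :=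
              fun i => cIdx_step Pp hv i (hesc2 i) (hesc2 (i+1))
            obtain ⟨i, hiT, hnp⟩ := hDodge hTb (fun i => cIdx (f i)) hτ
            have hBc' : Bb (f i) := hH' i hiT
            have hfi : f i = .Bc (cIdx (f i)) := isBc_eq (hesc2 i)
            obtain ⟨N', hN'⟩ := hB3 (cIdx (f i)) hnp
            have h1 : Bb (.Z (max N' NB)) := (hN' _ (by omega)).1 (hfi ▸ hBc')
            exact hval ((hBZ _ NB (by omega) (le_refl _)).1 h1)
  refine ⟨?_, ?_, ?_, ?_⟩
  · obtain ⟨N, _, hN⟩ := mono_stab (fun n => EshR Pp T Aa Bb (.Z n)) (max NA NB)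
      (fun n n' hn hnn' h => EshR_head Pp (fun u hu => E5_Z_up Pp hu hnn')
        (hAZ n n' (by omega) (by omega)) (hBZ n n' (by omega) (by omega)) h)
    exact ⟨N, hN⟩
  · obtain ⟨N, _, hN⟩ := mono_stab (fun m => EshR Pp T Aa Bb (.Y m)) (max NAY NBY)
      (fun m m' hm hmm' h => EshR_head Pp (fun u hu => E5_Y_up Pp hu hmm')
        (hAY m m' (by omega) (by omega)) (hBY m m' (by omega) (by omega)) h)
    exact ⟨N, hN⟩
  · intro t ht
    obtain ⟨NA3, hNA3⟩ := hA3 t ht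
    obtain ⟨NB3, hNB3⟩ := hB3 t ht
    have hback : ∀ n, max NA3 NB3 ≤ n →
        EshR Pp T Aa Bb (.Z n) → EshR Pp T Aa Bb (.Bc t) := by
      intro n hn h
      exact EshR_head Pp (fun u hu => E5_Bc_from_Z Pp hu ht)
        ((hNA3 n (by omega)).symm) ((hNB3 n (by omega)).symm) h
    by_cases hBc : EshR Pp T Aa Bb (.Bc t)
    · obtain ⟨N₁, hfor⟩ := hforward t hBc
      refine ⟨max N₁ (max NA3 NB3), fun n hn => ?_⟩
      have := hfor n (by omega)
      rw [if_neg ht] at this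
      exact iff_of_true hBc this
    · refine ⟨max NA3 NB3, fun n hn => ?_⟩
      exact iff_of_false hBc (fun h => hBc (hback n hn h))
  · intro t ht
    obtain ⟨NA4, hNA4⟩ := hA4 t ht
    obtain ⟨NB4, hNB4⟩ := hB4 t ht
    have hback : ∀ m, max NA4 NB4 ≤ m →
        EshR Pp T Aa Bb (.Y m) → EshR Pp T Aa Bb (.Bc t) := by
      intro m hm h
      exact EshR_head Pp (fun u hu => E5_Bc_from_Y Pp hu)
        ((hNA4 m (by omega)).symm) ((hNB4 m (by omega)).symm) h
    by_cases hBc : EshR Pp T Aa Bb (.Bc t)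
    · obtain ⟨N₁, hfor⟩ := hforward t hBc
      refine ⟨max N₁ (max NA4 NB4), fun m hm => ?_⟩
      have := hfor m (by omega)
      rw [if_pos ht] at this
      exact iff_of_true hBc this
    · refine ⟨max NA4 NB4, fun m hm => ?_⟩
      exact iff_of_false hBc (fun h => hBc (hback m hm h))

end Transfer


section Main

variable {A : Type} {Va Wa : Set A}

/-- Automata occurring in a formula. -/
def autosA : CTLF2 AP A Va Wa → List A
  | .atom _ => []
  | .neg φ => autosA φ
  | .conj φ ψ => autosA φ ++ autosA ψ
  | .eu a φ ψ => a.1 :: (autosA φ ++ autosA ψ)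
  | .au a φ ψ => a.1 :: (autosA φ ++ autosA ψ)
  | .er a φ ψ => a.1 :: (autosA φ ++ autosA ψ)
  | .ar a φ ψ => a.1 :: (autosA φ ++ autosA ψ)

/-- The dodging property of a position set with respect to the chain. -/
def DodgeT (Pp : ℕ → Prop) (T : Set ℕ) : Prop :=
  (¬ ∃ H₀, ∀ i ∈ T, i ≤ H₀) → ∀ τ : ℕ → ℕ,
      (∀ i, τ (i+1) = τ i + 1 ∨ (τ (i+1) = τ i ∧ ¬ Pp (τ i))) → ∃ i ∈ T, ¬ Pp (τ i)

lemma main_stab (lang : A → Set (List Γ)) (q : AP) (γ₀ : Γ) (Pp : ℕ → Prop)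
    (hNA : ∀ u, ¬ (Pp u ∧ Pp (u+1))) :
    ∀ φ : CTLF2 AP A Va Wa, (∀ b ∈ autosA φ, DodgeT Pp (Tset lang γ₀ b)) →
    StabP Pp (CTLF2.Sat lang (M5 q γ₀ Pp) φ) := by
  intro φ
  induction φ with
  | atom p =>
      intro _
      refine ⟨⟨0, fun n n' _ _ => Iff.rfl⟩, ⟨0, fun m m' _ _ => Iff.rfl⟩,
        fun t ht => ⟨0, fun n _ => ?_⟩, fun t ht => ⟨0, fun m _ => ?_⟩⟩
      · show p ∈ (M5 (AP := AP) q γ₀ Pp).label (.Bc t) ↔ p ∈ (M5 (AP := AP) q γ₀ Pp).label (.Z n)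
        simp [M5, lbl5, ht]
      · show p ∈ (M5 (AP := AP) q γ₀ Pp).label (.Bc t) ↔ p ∈ (M5 (AP := AP) q γ₀ Pp).label (.Y m)
        simp [M5, lbl5, ht]
  | neg φ ih =>
      intro hD
      exact StabP.congrP Pp (fun s => Iff.rfl) (StabP.negP Pp (ih hD))
  | conj φ ψ ihφ ihψ =>
      intro hD
      have h1 := ihφ (fun b hb => hD b (by simp [autosA]; exact Or.inl hb))
      have h2 := ihψ (fun b hb => hD b (by simp [autosA]; exact Or.inr hb))
      exact StabP.congrP Pp (fun s => Iff.rfl) (StabP.conjP Pp h1 h2)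
  | eu a α β ihα ihβ =>
      intro hD
      have h1 := ihα (fun b hb => hD b (by simp [autosA]; exact Or.inr (Or.inl hb)))
      have h2 := ihβ (fun b hb => hD b (by simp [autosA]; exact Or.inr (Or.inr hb)))
      exact StabP.congrP Pp (fun s => (sat_eu_iff lang q γ₀ Pp a α β s).symm)
        (EshU_StabP hNA (Tset lang γ₀ a.1) h1 h2)
  | au a α β ihα ihβ =>
      intro hD
      have h1 := ihα (fun b hb => hD b (by simp [autosA]; exact Or.inr (Or.inl hb)))
      have h2 := ihβ (fun b hb => hD b (by simp [autosA]; exact Or.inr (Or.inr hb)))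
      have hd : DodgeT Pp (Tset lang γ₀ a.1) := hD a.1 (by simp [autosA])
      refine StabP.congrP Pp (fun s => ?_)
        (StabP.negP Pp (EshR_StabP hNA (Tset lang γ₀ a.1) hd
          (StabP.negP Pp h1) (StabP.negP Pp h2)))
      exact (not_congr (not_sat_au_iff lang q γ₀ Pp a α β s).symm).trans not_not
  | er a α β ihα ihβ =>
      intro hD
      have h1 := ihα (fun b hb => hD b (by simp [autosA]; exact Or.inr (Or.inl hb)))
      have h2 := ihβ (fun b hb => hD b (by simp [autosA]; exact Or.inr (Or.inr hb)))
      have hd : DodgeT Pp (Tset lang γ₀ a.1) := hD a.1 (by simp [autosA])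
      exact StabP.congrP Pp (fun s => (sat_er_iff lang q γ₀ Pp a α β s).symm)
        (EshR_StabP hNA (Tset lang γ₀ a.1) hd h1 h2)
  | ar a α β ihα ihβ =>
      intro hD
      have h1 := ihα (fun b hb => hD b (by simp [autosA]; exact Or.inr (Or.inl hb)))
      have h2 := ihβ (fun b hb => hD b (by simp [autosA]; exact Or.inr (Or.inr hb)))
      refine StabP.congrP Pp (fun s => ?_)
        (StabP.negP Pp (EshU_StabP hNA (Tset lang γ₀ a.1)
          (StabP.negP Pp h1) (StabP.negP Pp h2)))
      exact (not_congr (not_sat_ar_iff lang q γ₀ Pp a α β s).symm).trans not_not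

end Main


section PConstruction

variable {A : Type}

/-- Successive gap of the `r`-th element of the effective set of `b`. -/
noncomputable def gapT (lang : A → Set (List Γ)) (γ₀ : Γ) (b : A) (r : ℕ) : ℕ :=
  Nat.nth (· ∈ Tset lang γ₀ b) (r+1) - Nat.nth (· ∈ Tset lang γ₀ b) r

/-- The gap function dominating the gaps of all infinite effective sets in `L`. -/
noncomputable def gpF (lang : A → Set (List Γ)) (γ₀ : Γ) (L : List A) (r : ℕ) : ℕ :=
  2 + L.foldr (fun b acc =>
    max (if (Tset lang γ₀ b).Infinite then (Finset.range (r+1)).sup (gapT lang γ₀ b) else 0)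
      acc) 0

/-- The chain `q`-positions. -/
noncomputable def pF (lang : A → Set (List Γ)) (γ₀ : Γ) (L : List A) : ℕ → ℕ
  | 0 => 1
  | r+1 => pF lang γ₀ L r + gpF lang γ₀ L r

lemma foldr_max_le {f : A → ℕ} {L : List A} {b : A} (hb : b ∈ L) :
    f b ≤ L.foldr (fun x acc => max (f x) acc) 0 := by
  induction L with
  | nil => simp at hb
  | cons x xs ih =>
      rcases List.mem_cons.1 hb with rfl | hb'
      · exact le_max_left _ _
      · exact le_trans (ih hb') (le_max_right _ _)

lemma gpF_ge_two (lang : A → Set (List Γ)) (γ₀ : Γ) (L : List A) (r : ℕ) :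
    2 ≤ gpF lang γ₀ L r := Nat.le_add_right _ _

lemma gpF_ge_gap (lang : A → Set (List Γ)) (γ₀ : Γ) {L : List A} {b : A} (hb : b ∈ L)
    (hinf : (Tset lang γ₀ b).Infinite) (r r' : ℕ) (hr : r' ≤ r) :
    gapT lang γ₀ b r' + 2 ≤ gpF lang γ₀ L r := by
  unfold gpF
  have h1 : gapT lang γ₀ b r' ≤ (Finset.range (r+1)).sup (gapT lang γ₀ b) :=
    Finset.le_sup (Finset.mem_range.mpr (by omega))
  have h2 := foldr_max_le
    (f := fun b => if (Tset lang γ₀ b).Infinite then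
      (Finset.range (r+1)).sup (gapT lang γ₀ b) else 0) hb
  have h2' : (if (Tset lang γ₀ b).Infinite then (Finset.range (r+1)).sup (gapT lang γ₀ b) else 0) ≤
      L.foldr (fun b acc =>
        max (if (Tset lang γ₀ b).Infinite then (Finset.range (r+1)).sup (gapT lang γ₀ b) else 0)
          acc) 0 := h2
  rw [if_pos hinf] at h2'
  omega

lemma pF_gap (lang : A → Set (List Γ)) (γ₀ : Γ) (L : List A) (r : ℕ) :
    pF lang γ₀ L r + 2 ≤ pF lang γ₀ L (r+1) := by
  have := gpF_ge_two lang γ₀ L r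
  show pF lang γ₀ L r + 2 ≤ pF lang γ₀ L r + gpF lang γ₀ L r
  omega

lemma pF_strictMono (lang : A → Set (List Γ)) (γ₀ : Γ) (L : List A) :
    StrictMono (pF lang γ₀ L) := by
  apply strictMono_nat_of_lt_succ
  intro r
  have := pF_gap lang γ₀ L r
  omega

lemma pF_ge (lang : A → Set (List Γ)) (γ₀ : Γ) (L : List A) (r : ℕ) :
    r + 1 ≤ pF lang γ₀ L r := by
  induction r with
  | zero => simp [pF]
  | succ n ih =>
      have := pF_gap lang γ₀ L n
      omega

/-- The chain predicate. -/
def PpF (lang : A → Set (List Γ)) (γ₀ : Γ) (L : List A) : ℕ → Prop :=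
  fun u => ∃ i, pF lang γ₀ L i = u

lemma PpF_not_adj (lang : A → Set (List Γ)) (γ₀ : Γ) (L : List A) (u : ℕ) :
    ¬ (PpF lang γ₀ L u ∧ PpF lang γ₀ L (u+1)) := by
  rintro ⟨⟨i, hi⟩, ⟨j, hj⟩⟩
  have hmono := pF_strictMono lang γ₀ L
  rcases lt_trichotomy i j with h | h | h
  · have h1 : pF lang γ₀ L (i+1) ≤ pF lang γ₀ L j := hmono.le_iff_le.2 (by omega)
    have h2 := pF_gap lang γ₀ L i
    omega
  · subst h; omega
  · have h1 : pF lang γ₀ L j < pF lang γ₀ L i := hmono h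
    omega

lemma PpF_not_zero (lang : A → Set (List Γ)) (γ₀ : Γ) (L : List A) :
    ¬ PpF lang γ₀ L 0 := by
  rintro ⟨i, hi⟩
  have := pF_ge lang γ₀ L i
  omega

/-- The dodging property. -/
lemma PpF_dodge (lang : A → Set (List Γ)) (γ₀ : Γ) (L : List A) {b : A} (hb : b ∈ L) :
    DodgeT (PpF lang γ₀ L) (Tset lang γ₀ b) := by
  intro hTub τ hτ
  by_contra hcon
  push_neg at hcon
  -- the effective set is infinite
  have hinf : (Tset lang γ₀ b).Infinite := by
    by_contra hfin
    rw [Set.not_infinite] at hfin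
    rcases hfin.bddAbove with ⟨H₀, hH₀⟩
    exact hTub ⟨H₀, fun i hi => hH₀ hi⟩
  have hinf' : (setOf (· ∈ Tset lang γ₀ b)).Infinite := hinf
  set x := Nat.nth (· ∈ Tset lang γ₀ b) with hx
  have hx0T : x 0 ∈ Tset lang γ₀ b := Nat.nth_mem_of_infinite hinf' 0
  have hx1T : x 1 ∈ Tset lang γ₀ b := Nat.nth_mem_of_infinite hinf' 1
  have hx01 : x 0 < x 1 := (Nat.nth_lt_nth hinf').2 (by omega)
  -- τ is nondecreasing with unit increments
  have hτmono : ∀ i d, τ (i + d) ≤ τ i + d ∧ τ i ≤ τ (i + d) := by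
    intro i d
    induction d with
    | zero => simp
    | succ e ih =>
        rcases hτ (i + e) with h | ⟨h, _⟩ <;>
          (rw [show i + (e+1) = (i + e) + 1 by omega, h]; omega)
  -- strictness between the two enumerated positions
  have hstrict : τ (x 0) < τ (x 1) := by
    by_contra hle
    push_neg at hle
    have h1 : τ (x 0 + 1) ≤ τ (x 0) := by
      have h2 := (hτmono (x 0 + 1) (x 1 - (x 0 + 1))).2
      rw [show x 0 + 1 + (x 1 - (x 0 + 1)) = x 1 by omega] at h2
      omega
    rcases hτ (x 0) with h | ⟨_, hnp⟩
    · omega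
    · exact hnp (hcon (x 0) hx0T)
  obtain ⟨i0, hi0⟩ := hcon (x 0) hx0T
  obtain ⟨i1, hi1⟩ := hcon (x 1) hx1T
  have hmono := pF_strictMono lang γ₀ L
  have hii : i0 < i1 := by
    by_contra hge
    push_neg at hge
    have : pF lang γ₀ L i1 ≤ pF lang γ₀ L i0 := hmono.le_iff_le.2 hge
    omega
  have h1 : pF lang γ₀ L (i0 + 1) ≤ pF lang γ₀ L i1 := hmono.le_iff_le.2 (by omega)
  have h2 : gapT lang γ₀ b 0 + 2 ≤ gpF lang γ₀ L i0 :=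
    gpF_ge_gap lang γ₀ hb hinf i0 0 (by omega)
  have h3 : τ (x 1) ≤ τ (x 0) + (x 1 - x 0) := by
    have := (hτmono (x 0) (x 1 - x 0)).1
    rw [show x 0 + (x 1 - x 0) = x 1 by omega] at this
    exact this
  have h4 : gapT lang γ₀ b 0 = x 1 - x 0 := rfl
  have h5 : pF lang γ₀ L (i0 + 1) = pF lang γ₀ L i0 + gpF lang γ₀ L i0 := rfl
  omega

end PConstruction


section FGfacts

/-- The model with a chosen initial state. -/
def K5I (q : AP) (γ₀ : Γ) (Pp : ℕ → Prop) (s0 : St5) : KTS AP Γ St5 :=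
  ⟨s0, fun s γ t => E5 Pp s t ∧ γ = γ₀, lbl5 q Pp⟩

def isY : St5 → Prop
  | .Y _ => True
  | _ => False

variable (Pp : ℕ → Prop)

lemma ZY_closed {f : ℕ → St5} (hv : Vd Pp f) (h0 : ¬ isBc (f 0)) : ∀ i, ¬ isBc (f i) := by
  intro i
  induction i with
  | zero => exact h0
  | succ n ih =>
      have hstep := hv n
      cases h1 : f n with
      | Z k =>
          rw [h1] at hstep
          rcases E5_Z_inv Pp hstep with ⟨j, hj, _⟩ | ⟨m, hm, _⟩
          · rw [hj]; simp [isBc]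
          · rw [hm]; simp [isBc]
      | Y m =>
          rw [h1] at hstep
          obtain ⟨j, hj, _⟩ := E5_Y_inv Pp hstep
          rw [hj]; simp [isBc]
      | Bc t => rw [h1] at ih; simp [isBc] at ih

lemma bud_step {f : ℕ → St5} (hv : Vd Pp f) (hZY : ∀ i, ¬ isBc (f i)) (i : ℕ) :
    bud5 (f (i+1)) ≤ bud5 (f i) ∧ (isY (f (i+1)) → bud5 (f (i+1)) < bud5 (f i)) := by
  have hstep := hv i
  cases h1 : f i with
  | Z k =>
      rw [h1] at hstep
      rcases E5_Z_inv Pp hstep with ⟨j, hj, hle⟩ | ⟨m, hm, hlt⟩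
      · rw [hj]; exact ⟨by simp [bud5]; omega, by simp [isY]⟩
      · rw [hm]; exact ⟨by simp [bud5]; omega, fun _ => by simp [bud5]; omega⟩
  | Y m =>
      rw [h1] at hstep
      obtain ⟨j, hj, hle⟩ := E5_Y_inv Pp hstep
      rw [hj]; exact ⟨by simp [bud5]; omega, by simp [isY]⟩
  | Bc t =>
      exfalso
      apply hZY i
      rw [h1]; simp [isBc]

lemma bud_antitone {f : ℕ → St5} (hv : Vd Pp f) (hZY : ∀ i, ¬ isBc (f i)) :
    ∀ i j, i ≤ j → bud5 (f j) ≤ bud5 (f i) := by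
  intro i j hij
  induction j, hij using Nat.le_induction with
  | base => exact le_refl _
  | succ n hn ih => exact le_trans (bud_step Pp hv hZY n).1 ih

lemma eventually_noq (q : AP) {f : ℕ → St5} (hv : Vd Pp f) (h0 : ¬ isBc (f 0)) :
    ∃ k, ∀ j, q ∉ lbl5 q Pp (f (k + j)) := by
  have hZY := ZY_closed Pp hv h0
  have hne : (Set.range (fun i => bud5 (f i))).Nonempty := ⟨_, ⟨0, rfl⟩⟩
  obtain ⟨i0, hi0⟩ : ∃ i0, bud5 (f i0) = sInf (Set.range fun i => bud5 (f i)) := by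
    obtain ⟨i0, h⟩ := Nat.sInf_mem hne
    exact ⟨i0, h⟩
  refine ⟨i0 + 1, fun j => ?_⟩
  have hnotY : ¬ isY (f (i0 + 1 + j)) := by
    intro hY
    have harith : i0 + 1 + j = (i0 + j) + 1 := by omega
    have h1 : bud5 (f ((i0 + j) + 1)) < bud5 (f (i0 + j)) :=
      (bud_step Pp hv hZY (i0 + j)).2 (by rw [← harith]; exact hY)
    have h2 : bud5 (f (i0 + j)) ≤ bud5 (f i0) := bud_antitone Pp hv hZY i0 (i0+j) (by omega)
    have h3 : sInf (Set.range fun i => bud5 (f i)) ≤ bud5 (f ((i0 + j) + 1)) :=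
      Nat.sInf_le ⟨_, rfl⟩
    omega
  cases hfi : f (i0 + 1 + j) with
  | Z k => simp [lbl5]
  | Y m => rw [hfi] at hnotY; simp [isY] at hnotY
  | Bc t =>
      exfalso
      have := hZY (i0 + 1 + j)
      rw [hfi] at this
      simp [isBc] at this

variable {Ua : Type}

lemma sat_LTLtt (lg : Ua → Set (List Γ)) {S : Type} (K : KTS AP Γ S) (q : AP) (π : KPath K) :
    LTLF.Sat lg K (LTLF.tt q) π := by
  simp only [LTLF.tt, LTLF.Sat]
  rintro ⟨h1, h2⟩
  exact h2 h1

lemma sat_FG_iff (lg : Ua → Set (List Γ)) (a : Ua) (ha : lg a = Set.univ) (q : AP)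
    {S : Type} (K : KTS AP Γ S) (π : KPath K) :
    LTLF.Sat lg K (FGnotq a q) π ↔ ∃ k, ∀ j, q ∉ K.label (π.states (k + j)) := by
  simp only [FGnotq, LTLF.Sat]
  constructor
  · rintro ⟨k, hneg, -⟩
    refine ⟨k, fun j hq => hneg ?_⟩
    exact ⟨j, hq, fun _ _ => sat_LTLtt lg K q _, by rw [ha]; exact Set.mem_univ _⟩
  · rintro ⟨k, hk⟩
    refine ⟨k, ?_, fun j _ => sat_LTLtt lg K q _, by rw [ha]; exact Set.mem_univ _⟩
    rintro ⟨k', hq, -⟩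
    exact hk k' hq

lemma K5I_FG (lg : Ua → Set (List Γ)) (a : Ua) (ha : lg a = Set.univ) (q : AP) (γ₀ : Γ)
    (N : ℕ) : (K5I q γ₀ Pp (.Z N)).LTLModels lg (FGnotq a q) := by
  intro π h0
  rw [sat_FG_iff lg a ha q]
  have hv : Vd Pp π.states := fun i => (π.step i).1
  have h0' : ¬ isBc (π.states 0) := by rw [h0]; simp [K5I, isBc]
  exact eventually_noq Pp q hv h0'

lemma K5I_chain_notFG (lg : Ua → Set (List Γ)) (a : Ua) (ha : lg a = Set.univ) (q : AP)
    (γ₀ : Γ) (hPinf : ∀ k, ∃ u, k ≤ u ∧ Pp u) :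
    ¬ (K5I q γ₀ Pp (.Bc 0)).LTLModels lg (FGnotq a q) := by
  intro h
  have hπ : ∀ i, (K5I (AP := AP) q γ₀ Pp (.Bc 0)).trans (.Bc i) γ₀ (.Bc (i+1)) :=
    fun i => ⟨Or.inl rfl, rfl⟩
  set π : KPath (K5I (AP := AP) q γ₀ Pp (.Bc 0)) :=
    ⟨fun i => .Bc i, fun _ => γ₀, fun i => hπ i⟩ with hπdef
  have hsat := h π rfl
  rw [sat_FG_iff lg a ha q] at hsat
  obtain ⟨k, hk⟩ := hsat
  obtain ⟨u, hu, hPu⟩ := hPinf k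
  apply hk (u - k)
  have harith : k + (u - k) = u := by omega
  show q ∈ (K5I (AP := AP) q γ₀ Pp (.Bc 0)).label (π.states (k + (u - k)))
  have hst : π.states (k + (u - k)) = .Bc u := by rw [harith]
  rw [hst]
  show q ∈ lbl5 q Pp (.Bc u)
  simp [lbl5, hPu]

end FGfacts

/-- Conjunct 5: `F G ¬q` is not expressible in `CTL[V, W]`. -/
lemma fg_not_expressible [Nonempty Γ] {A : Type} {U Va Wa : Set A} (q : AP)
    (lang : A → Set (List Γ)) (a : {x // x ∈ U}) (ha : lang a.1 = Set.univ) :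
    ¬ ∃ ψ : CTLF2 AP A Va Wa, ∀ (S : Type) (K : KTS AP Γ S),
      K.LTLModels (fun b => lang b.1) (FGnotq a q) ↔ K.CTL2Models lang ψ := by
  rintro ⟨ψ, hψ⟩
  classical
  set γ₀ : Γ := Classical.arbitrary Γ with hγ₀
  set L := autosA ψ with hL
  set Pp := PpF lang γ₀ L with hPp
  have hNA := PpF_not_adj lang γ₀ L
  have hD : ∀ b ∈ L, DodgeT Pp (Tset lang γ₀ b) := fun b hb => PpF_dodge lang γ₀ L hb
  have hstab := main_stab lang q γ₀ Pp hNA ψ hD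
  obtain ⟨N, hN⟩ := hstab.2.2.1 0 (PpF_not_zero lang γ₀ L)
  have h1 : (K5I q γ₀ Pp (.Z N)).LTLModels (fun b => lang b.1) (FGnotq a q) :=
    K5I_FG Pp (fun b => lang b.1) a ha q γ₀ N
  have h2 : CTLF2.Sat lang (K5I q γ₀ Pp (.Z N)) ψ (.Z N) := (hψ St5 _).1 h1
  have h3 : CTLF2.Sat lang (M5 q γ₀ Pp) ψ (.Z N) :=
    (CTLF2.sat_congr lang (K5I q γ₀ Pp (.Z N)) (M5 q γ₀ Pp) rfl rfl ψ (.Z N)).1 h2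
  have h4 : CTLF2.Sat lang (M5 q γ₀ Pp) ψ (.Bc 0) := (hN N (le_refl N)).2 h3
  have h5 : (K5I q γ₀ Pp (.Bc 0)).CTL2Models lang ψ :=
    (CTLF2.sat_congr lang (M5 q γ₀ Pp) (K5I q γ₀ Pp (.Bc 0)) rfl rfl ψ (.Bc 0)).1 h4
  have h6 := (hψ St5 _).2 h5
  have hPinf : ∀ k, ∃ u, k ≤ u ∧ Pp u := by
    intro k
    refine ⟨pF lang γ₀ L k, ?_, ⟨k, rfl⟩⟩
    have := pF_ge lang γ₀ L k
    omega
  exact K5I_chain_notFG Pp (fun b => lang b.1) a ha q γ₀ hPinf h6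

end Conj5

end Aux

/-- For arbitrary reasonable classes `U, V, W`, the logics `LTL[U]` and
`CTL[V, W]` have incomparable expressivity.  In particular, `LTL[U]` is invariant under trace
equivalence of KTSs while `CTL[V, W]` is not, and the plain LTL formula `F G ¬q` is not
expressible in `CTL[V, W]`. -/
theorem ltl_ctl_incomparable (AP Γ A : Type) [Nonempty Γ] (q m : AP) (hqm : q ≠ m)
    (lang : A → Set (List Γ)) (U V W : Set A)
    (hU : ReasonableCls lang U) (hV : ReasonableCls lang V) (hW : ReasonableCls lang W) :
    -- LTL[U] ≰ CTL[V, W]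
    (¬ ∀ φ : LTLF AP {a // a ∈ U}, ∃ ψ : CTLF2 AP A V W,
        ∀ (S : Type) (K : KTS AP Γ S),
          K.LTLModels (fun a => lang a.1) φ ↔ K.CTL2Models lang ψ) ∧
    -- CTL[V, W] ≰ LTL[U]
    (¬ ∀ ψ : CTLF2 AP A V W, ∃ φ : LTLF AP {a // a ∈ U},
        ∀ (S : Type) (K : KTS AP Γ S),
          K.CTL2Models lang ψ ↔ K.LTLModels (fun a => lang a.1) φ) ∧
    -- LTL[U] is invariant under trace equivalence
    (∀ (φ : LTLF AP {a // a ∈ U}) (S S' : Type) (K : KTS AP Γ S) (K' : KTS AP Γ S'),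
      K.traces = K'.traces →
      (K.LTLModels (fun a => lang a.1) φ ↔ K'.LTLModels (fun a => lang a.1) φ)) ∧
    -- CTL[V, W] is not invariant under trace equivalence
    (∃ (ψ : CTLF2 AP A V W) (S S' : Type) (K : KTS AP Γ S) (K' : KTS AP Γ S'),
      K.traces = K'.traces ∧ K.CTL2Models lang ψ ∧ ¬ K'.CTL2Models lang ψ) ∧
    -- F G ¬q is not expressible in CTL[V, W]
    (∀ a : {x // x ∈ U}, lang a.1 = Set.univ →
      ¬ ∃ ψ : CTLF2 AP A V W, ∀ (S : Type) (K : KTS AP Γ S),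
        K.LTLModels (fun a => lang a.1) (FGnotq a q) ↔ K.CTL2Models lang ψ) := by
  classical
  set γ₀ : Γ := Classical.arbitrary Γ with hγ₀
  obtain ⟨-, ⟨aV0, haV0, haVuniv⟩, -⟩ := hV
  obtain ⟨-, ⟨aW0, haW0, haWuniv⟩, -⟩ := hW
  obtain ⟨-, ⟨aU0, haU0, haUuniv⟩, -⟩ := hU
  set aV : {a // a ∈ V} := ⟨aV0, haV0⟩ with haV
  set aW : {a // a ∈ W} := ⟨aW0, haW0⟩ with haW
  -- the trace-equivalent pair distinguished by `psi4`
  have htreq : (KA (AP := AP) (Γ := Γ) q m γ₀).traces = (KB (AP := AP) q m γ₀).traces := by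
    rw [KA_traces, KB_traces]
  have hKAsat : (KA (AP := AP) (Γ := Γ) q m γ₀).CTL2Models lang (psi4 q m aV aW) :=
    KA_sat_psi4 lang q m γ₀ hqm aV aW haVuniv haWuniv
  have hKBnot : ¬ (KB (AP := AP) (Γ := Γ) q m γ₀).CTL2Models lang (psi4 q m aV aW) :=
    KB_not_sat_psi4 lang q m γ₀ hqm aV aW haVuniv haWuniv
  refine ⟨?_, ?_, ?_, ?_, ?_⟩
  · -- LTL[U] ≰ CTL[V, W]
    intro hall
    obtain ⟨ψ, hψ⟩ := hall (FGnotq ⟨aU0, haU0⟩ q)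
    exact fg_not_expressible q lang ⟨aU0, haU0⟩ haUuniv ⟨ψ, hψ⟩
  · -- CTL[V, W] ≰ LTL[U]
    intro hall
    obtain ⟨φ, hφ⟩ := hall (psi4 q m aV aW)
    have h1 : (KA (AP := AP) (Γ := Γ) q m γ₀).LTLModels (fun a => lang a.1) φ :=
      (hφ StA (KA q m γ₀)).1 hKAsat
    have h2 : (KB (AP := AP) (Γ := Γ) q m γ₀).LTLModels (fun a => lang a.1) φ :=
      (ltl_trace_invariant (fun a => lang a.1) (KA q m γ₀) (KB q m γ₀) htreq φ).1 h1
    exact hKBnot ((hφ StB (KB q m γ₀)).2 h2)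
  · -- trace invariance of LTL[U]
    intro φ S S' K K' h
    exact ltl_trace_invariant (fun a => lang a.1) K K' h φ
  · -- CTL[V, W] is not invariant under trace equivalence
    exact ⟨psi4 q m aV aW, StA, StB, KA q m γ₀, KB q m γ₀, htreq, hKAsat, hKBnot⟩
  · -- F G ¬q is not expressible in CTL[V, W]
    intro a ha
    exact fg_not_expressible q lang a ha
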